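/- arXiv:2103.01727 — 8 statements merged into one kernel-verified Lean document; each statement's English description precedes it below -/
import Mathlib

section
/- For each n ∈ ℕ and α ∈ [0,1], the function φ_{n,α}(t) = Σ_{j=1+⌊(n-1)α⌋}^{n} C(n,j) t^j (1-t)^{n-j} is strictly increasing on (0,1), satisfies φ_{n,α}(0)=0 and φ_{n,α}(1)=1 (hence is a distortion function), and its derivative φ'_{n,α} is increasing on (0, ⌊(n-1)α⌋/(n-1)) and decreasing on (⌊(n-1)α⌋/(n-1), 1). -/
/-!
`φ_{n,α}` is a tail `∑_{j > k} B_{n,j}` of the Bernstein basis, `k = ⌊(n-1)α⌋`.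
Since `B_{n,j}' = n (B_{n-1,j-1} - B_{n-1,j})`, the derivative telescopes to `n B_{n-1,k}`,
which is positive on `(0,1)`. With `m = n-1-k`, the logarithmic derivative of
`φ' = c t^k (1-t)^m` is `k/t - m/(1-t)`, which changes sign exactly at `k/(k+m) = ⌊(n-1)α⌋/(n-1)`.
-/

open MeasureTheory Set Filter

noncomputable def phi (n : ℕ) (α : ℝ) (t : ℝ) : ℝ :=
  ∑ j ∈ Finset.Icc (1 + (⌊((n : ℝ) - 1) * α⌋).toNat) n,
    (n.choose j : ℝ) * t ^ j * (1 - t) ^ (n - j)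

noncomputable def dphi (n : ℕ) (α : ℝ) (t : ℝ) : ℝ :=
  (n : ℝ) * ((n - 1).choose ((⌊((n : ℝ) - 1) * α⌋).toNat) : ℝ) *
    t ^ ((⌊((n : ℝ) - 1) * α⌋).toNat) * (1 - t) ^ (n - 1 - (⌊((n : ℝ) - 1) * α⌋).toNat)

open Finset Polynomial in
theorem bernsteinPolynomial.derivative_sum_Icc {R : Type*} [CommRing R] (n k : ℕ) :
    derivative (∑ j ∈ Icc (k + 1) (n + 1), bernsteinPolynomial R (n + 1) j) =
      (n + 1) * bernsteinPolynomial R n k := by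
  rw [← map_add_right_Icc k n 1, sum_map, derivative_sum]
  simp only [addRightEmbedding_apply, derivative_succ_aux, ← mul_sum]
  congr 1
  rcases le_or_gt k n with hkn | hnk
  · convert sum_Icc_sub hkn (fun i => -bernsteinPolynomial R n i) using 1
    · simp only [neg_sub_neg]
    · rw [neg_sub_neg, eq_zero_of_lt R n.lt_succ_self, sub_zero]
  · rw [Finset.Icc_eq_empty_of_lt hnk, sum_empty, eq_zero_of_lt R hnk]

theorem hasDerivAt_mul_pow_mul_one_sub_pow (c : ℝ) (a b : ℕ) {t : ℝ} (ht0 : t ≠ 0)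
    (ht1 : t ≠ 1) :
    HasDerivAt (fun t => c * t ^ a * (1 - t) ^ b)
      (c * t ^ a * (1 - t) ^ b * ((a - (a + b) * t) / (t * (1 - t)))) t := by
  have h := ((hasDerivAt_pow a t).const_mul c).mul
    ((hasDerivAt_pow b (1 - t)).comp t ((hasDerivAt_id t).const_sub 1))
  refine h.congr_deriv ?_
  have h1 : 1 - t ≠ 0 := sub_ne_zero.mpr ht1.symm
  rcases a with _ | a <;> rcases b with _ | b <;> simp [pow_succ]
  all_goals field_simp
  ring

theorem monotoneOn_mul_pow_mul_one_sub_pow {c : ℝ} (hc : 0 ≤ c) (a b : ℕ) :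
    MonotoneOn (fun t => c * t ^ a * (1 - t) ^ b) (Icc 0 (a / (a + b))) := by
  rcases Nat.eq_zero_or_pos (a + b) with hab | hab
  · obtain ⟨rfl, rfl⟩ := Nat.add_eq_zero_iff.mp hab
    simp
  replace hab : (0 : ℝ) < a + b := by exact_mod_cast hab
  have hp : (a : ℝ) / (a + b) ≤ 1 := div_le_one_of_le₀ (by simp) hab.le
  apply monotoneOn_of_hasDerivWithinAt_nonneg (convex_Icc _ _) (by fun_prop)
    (fun t ht => by
      rw [interior_Icc] at ht
      exact (hasDerivAt_mul_pow_mul_one_sub_pow c a b ht.1.ne'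
        (ht.2.trans_le hp).ne).hasDerivWithinAt)
  rw [interior_Icc]
  rintro t ⟨ht0, hta⟩
  have : (a + b) * t ≤ a := by rw [lt_div_iff₀ hab] at hta; linarith
  have : 0 < 1 - t := by linarith
  positivity

theorem antitoneOn_mul_pow_mul_one_sub_pow {c : ℝ} (hc : 0 ≤ c) (a b : ℕ) :
    AntitoneOn (fun t => c * t ^ a * (1 - t) ^ b) (Icc (a / (a + b)) 1) := by
  rcases Nat.eq_zero_or_pos (a + b) with hab | hab
  · obtain ⟨rfl, rfl⟩ := Nat.add_eq_zero_iff.mp hab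
    simp [antitoneOn_const]
  replace hab : (0 : ℝ) < a + b := by exact_mod_cast hab
  have hp : 0 ≤ (a : ℝ) / (a + b) := by positivity
  apply antitoneOn_of_hasDerivWithinAt_nonpos (convex_Icc _ _) (by fun_prop)
    (fun t ht => by
      rw [interior_Icc] at ht
      exact (hasDerivAt_mul_pow_mul_one_sub_pow c a b (hp.trans_lt ht.1).ne'
        ht.2.ne).hasDerivWithinAt)
  rw [interior_Icc]
  rintro t ⟨hat, ht1⟩
  have : a ≤ (a + b) * t := by rw [div_lt_iff₀ hab] at hat; linarith
  have : 0 < t := hp.trans_lt hat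
  have : 0 < 1 - t := by linarith
  exact mul_nonpos_of_nonneg_of_nonpos (by positivity)
    (div_nonpos_of_nonpos_of_nonneg (by linarith) (by positivity))

noncomputable def phiIndex (n : ℕ) (α : ℝ) : ℕ := (⌊((n : ℝ) - 1) * α⌋).toNat

theorem phiIndex_le_sub_one {n : ℕ} (hn : 1 ≤ n) {α : ℝ} (hα : α ≤ 1) :
    phiIndex n α ≤ n - 1 := by
  have h : ((n : ℝ) - 1) * α ≤ ((n - 1 : ℕ) : ℤ) := by
    push_cast [Nat.cast_sub hn]
    nlinarith [show (1 : ℝ) ≤ n by exact_mod_cast hn]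
  exact Int.toNat_le.mpr ((Int.floor_le_floor h).trans_eq (Int.floor_intCast _))

theorem cast_phiIndex {n : ℕ} (hn : 1 ≤ n) {α : ℝ} (hα : 0 ≤ α) :
    (phiIndex n α : ℝ) = ⌊((n : ℝ) - 1) * α⌋ := by
  unfold phiIndex
  have : (0 : ℝ) ≤ (n : ℝ) - 1 := by simp [show (1 : ℝ) ≤ n by exact_mod_cast hn]
  exact_mod_cast Int.toNat_of_nonneg (Int.floor_nonneg.mpr (mul_nonneg this hα))

open Polynomial in
theorem phi_eq_eval (n : ℕ) (α t : ℝ) :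
    phi n α t = (∑ j ∈ Finset.Icc (phiIndex n α + 1) n, bernsteinPolynomial ℝ n j).eval t := by
  simp [phi, phiIndex, bernsteinPolynomial, eval_finsetSum, add_comm]

theorem hasDerivAt_phi {n : ℕ} (hn : 1 ≤ n) (α t : ℝ) :
    HasDerivAt (phi n α) (dphi n α t) t := by
  obtain ⟨n, rfl⟩ := Nat.exists_eq_add_of_le' hn
  rw [funext (phi_eq_eval (n + 1) α)]
  refine (Polynomial.hasDerivAt _ t).congr_deriv ?_
  rw [bernsteinPolynomial.derivative_sum_Icc]
  simp only [bernsteinPolynomial, phiIndex, dphi, Nat.cast_add, Nat.cast_one,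
    add_sub_cancel_right, add_tsub_cancel_right, Polynomial.eval_mul, Polynomial.eval_add,
    Polynomial.eval_natCast, Polynomial.eval_one, Polynomial.eval_pow, Polynomial.eval_X,
    Polynomial.eval_sub]
  ring

theorem phi_zero (n : ℕ) (α : ℝ) : phi n α 0 = 0 := by
  simp [phi_eq_eval, Polynomial.eval_finsetSum, bernsteinPolynomial.eval_at_0]

theorem phi_one {n : ℕ} (hn : 1 ≤ n) {α : ℝ} (hα : α ≤ 1) : phi n α 1 = 1 := by
  have := phiIndex_le_sub_one hn hα
  rw [phi_eq_eval, Polynomial.eval_finsetSum,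
    Finset.sum_eq_single_of_mem n (Finset.mem_Icc.mpr ⟨by omega, le_rfl⟩)]
  · simp [bernsteinPolynomial.eval_at_1]
  · intro j _ hjn
    simp [bernsteinPolynomial.eval_at_1, hjn]

theorem dphi_pos {n : ℕ} (hn : 1 ≤ n) {α : ℝ} (hα : α ≤ 1) {t : ℝ} (ht : t ∈ Ioo 0 1) :
    0 < dphi n α t := by
  obtain ⟨ht0, ht1⟩ := ht
  have := Nat.choose_pos (phiIndex_le_sub_one hn hα)
  have : 0 < 1 - t := by linarith
  unfold dphi
  positivity

/-- `φ_{n,α}` satisfies `φ(0)=0`, `φ(1)=1`, is strictly increasing on `(0,1)`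
(hence a distortion function), and its derivative `φ'_{n,α}` is increasing on
`(0, ⌊(n-1)α⌋/(n-1))` and decreasing on `(⌊(n-1)α⌋/(n-1), 1)`. -/
theorem stmt3 (n : ℕ) (hn : 2 ≤ n) (α : ℝ) (hα : α ∈ Set.Icc (0:ℝ) 1) :
    phi n α 0 = 0 ∧ phi n α 1 = 1 ∧
    StrictMonoOn (phi n α) (Set.Ioo (0:ℝ) 1) ∧
    MonotoneOn (dphi n α)
      (Set.Ioo (0:ℝ) ((⌊((n : ℝ) - 1) * α⌋ : ℝ) / ((n : ℝ) - 1))) ∧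
    AntitoneOn (dphi n α)
      (Set.Ioo ((⌊((n : ℝ) - 1) * α⌋ : ℝ) / ((n : ℝ) - 1)) 1) := by
  obtain ⟨hα0, hα1⟩ := hα
  have hn1 : 1 ≤ n := by omega
  have hk := phiIndex_le_sub_one hn1 hα1
  have hc : (0 : ℝ) ≤ n * (n - 1).choose (phiIndex n α) := by positivity
  have hmode : (⌊((n : ℝ) - 1) * α⌋ : ℝ) / ((n : ℝ) - 1) =
      phiIndex n α / (phiIndex n α + (n - 1 - phiIndex n α : ℕ)) := by
    rw [← cast_phiIndex hn1 hα0]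
    push_cast [Nat.cast_sub hn1, Nat.cast_sub hk]
    ring_nf
  refine ⟨phi_zero n α, phi_one hn1 hα1, ?_, ?_, ?_⟩
  · refine strictMonoOn_of_hasDerivWithinAt_pos (convex_Ioo 0 1)
      (fun t _ => (hasDerivAt_phi hn1 α t).continuousAt.continuousWithinAt)
      (fun t _ => (hasDerivAt_phi hn1 α t).hasDerivWithinAt) (fun t ht => ?_)
    rw [interior_Ioo] at ht
    exact dphi_pos hn1 hα1 ht
  · rw [hmode]
    exact (monotoneOn_mul_pow_mul_one_sub_pow hc _ _).mono Ioo_subset_Icc_self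
  · rw [hmode]
    exact (antitoneOn_mul_pow_mul_one_sub_pow hc _ _).mono Ioo_subset_Icc_self
end

section
/- Let γ ∈ [0,1] and define ξ_γ : (0,1)×(0,1) → ℝ by ξ_γ(t,s) = (t/s)^γ · ((1-t)/(1-s))^{1-γ}. If 0 < t < s ≤ γ or 1 > t > s ≥ γ, then ξ_γ(t,s) < 1. -/
/-!
Write `ξ_γ(t,s) = a^γ b^(1-γ)` with `a = t/s`, `b = (1-t)/(1-s)`. By weighted AM-GM it is at most
`γ a + (1-γ) b = 1 + (t-s)(γ-s)/(s(1-s))`, and the hypotheses make `(t-s)(γ-s) ≤ 0`.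
If `γ ≠ s` this bound is already `< 1`; if `γ = s ∈ (0,1)` it equals `1`, but then AM-GM is
strict because `a ≠ b` (as `t ≠ s`).
-/

lemma weighted_sum_div_add_one_sub_div_one_sub (γ t : ℝ) {s : ℝ} (hs₀ : s ≠ 0) (hs₁ : s ≠ 1) :
    γ * (t / s) + (1 - γ) * ((1 - t) / (1 - s)) = 1 + (t - s) * (γ - s) / (s * (1 - s)) := by
  have : 1 - s ≠ 0 := sub_ne_zero.2 hs₁.symm
  field_simp
  ring

lemma div_eq_one_sub_div_one_sub_iff {t s : ℝ} (hs₀ : s ≠ 0) (hs₁ : s ≠ 1) :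
    t / s = (1 - t) / (1 - s) ↔ t = s := by
  have : 1 - s ≠ 0 := sub_ne_zero.2 hs₁.symm
  rw [div_eq_div_iff hs₀ this]
  constructor <;> intro h <;> linarith

/-- For `γ ∈ [0,1]` and `ξ_γ(t,s) = (t/s)^γ ((1-t)/(1-s))^{1-γ}`:
if `0 < t < s ≤ γ` or `1 > t > s ≥ γ`, then `ξ_γ(t,s) < 1`. -/
theorem stmt4 (γ t s : ℝ) (hγ : γ ∈ Set.Icc (0:ℝ) 1)
    (ht : t ∈ Set.Ioo (0:ℝ) 1) (hs : s ∈ Set.Ioo (0:ℝ) 1)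
    (h : (t < s ∧ s ≤ γ) ∨ (s < t ∧ γ ≤ s)) :
    (t / s) ^ γ * ((1 - t) / (1 - s)) ^ (1 - γ) < 1 := by
  obtain ⟨hs₀, hs₁⟩ := hs
  have ha : 0 ≤ t / s := div_nonneg ht.1.le hs₀.le
  have hb : 0 ≤ (1 - t) / (1 - s) := div_nonneg (by linarith [ht.2]) (by linarith)
  have hmean := weighted_sum_div_add_one_sub_div_one_sub γ t hs₀.ne' hs₁.ne
  have hts : t ≠ s := by
    rcases h with ⟨h, -⟩ | ⟨h, -⟩
    exacts [h.ne, h.ne']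
  rcases eq_or_ne γ s with rfl | hγs
  · calc (t / γ) ^ γ * ((1 - t) / (1 - γ)) ^ (1 - γ)
          < γ * (t / γ) + (1 - γ) * ((1 - t) / (1 - γ)) :=
            (Real.geom_mean_lt_arith_mean2_weighted_iff_of_pos hs₀ (by linarith) ha hb
              (by ring)).2 (mt (div_eq_one_sub_div_one_sub_iff hs₀.ne' hs₁.ne).1 hts)
      _ = 1 := by simp [hmean]
  · have hneg : (t - s) * (γ - s) < 0 := by
      have : (t - s) * (γ - s) ≠ 0 := mul_ne_zero (sub_ne_zero.2 hts) (sub_ne_zero.2 hγs)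
      refine this.lt_of_le ?_
      rcases h with ⟨h₁, h₂⟩ | ⟨h₁, h₂⟩ <;> nlinarith
    calc (t / s) ^ γ * ((1 - t) / (1 - s)) ^ (1 - γ)
          ≤ γ * (t / s) + (1 - γ) * ((1 - t) / (1 - s)) :=
            Real.geom_mean_le_arith_mean2_weighted hγ.1 (by linarith [hγ.2]) ha hb (by ring)
      _ < 1 := by
            rw [hmean]
            linarith [div_neg_of_neg_of_pos hneg (mul_pos hs₀ (sub_pos.2 hs₁))]
end

section
/- Let γ_n → γ ∈ [0,1] with |γ_n - γ| = O(1/n), and suppose 0 < t < s < γ or 1 > t > s > γ. Then lim_{n→∞} φ'_{n,γ_n}(t)/φ'_{n,γ_n}(s) = 0, where φ'_{n,α}(t) = n·C(n-1,⌊(n-1)α⌋)·t^{⌊(n-1)α⌋}(1-t)^{n-1-⌊(n-1)α⌋}. -/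
open MeasureTheory Set Filter

/-!
The binomial coefficients cancel, so with `k = ⌊(n-1)γ_n⌋` the ratio is
`(t/s)^k ((1-t)/(1-s))^(n-1-k) = exp (k log(t/s) + (n-1-k) log((1-t)/(1-s)))`.
Since `|k - (n-1)γ| = O(1)`, the exponent is `(n-1) c + O(1)` with
`c = γ log(t/s) + (1-γ) log((1-t)/(1-s))`, and `log x ≤ x - 1` gives
`c ≤ (t-s)(γ-s) / (s(1-s)) < 0` because `s` lies strictly between `t` and `γ`.
-/

open Real Topology

lemma mul_log_div_add_mul_log_div_le {γ s t : ℝ} (hγ0 : 0 ≤ γ) (hγ1 : γ ≤ 1)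
    (ht0 : 0 < t) (ht1 : t < 1) (hs0 : 0 < s) (hs1 : s < 1) :
    γ * log (t / s) + (1 - γ) * log ((1 - t) / (1 - s)) ≤
      (t - s) * (γ - s) / (s * (1 - s)) := by
  have h1 : γ * log (t / s) ≤ γ * (t / s - 1) :=
    mul_le_mul_of_nonneg_left (log_le_sub_one_of_pos (by positivity)) hγ0
  have h2 : (1 - γ) * log ((1 - t) / (1 - s)) ≤ (1 - γ) * ((1 - t) / (1 - s) - 1) :=
    mul_le_mul_of_nonneg_left
      (log_le_sub_one_of_pos (div_pos (sub_pos.2 ht1) (sub_pos.2 hs1))) (sub_nonneg.2 hγ1)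
  have hsum : γ * (t / s - 1) + (1 - γ) * ((1 - t) / (1 - s) - 1) =
      (t - s) * (γ - s) / (s * (1 - s)) := by
    field_simp [(sub_pos.2 hs1).ne']
    ring
  linarith

lemma tendsto_pow_mul_pow_atTop_nhds_zero {a b γ C : ℝ} (ha : 0 < a) (hb : 0 < b)
    (hrate : γ * log a + (1 - γ) * log b < 0) {k : ℕ → ℕ}
    (hk : ∀ᶠ n in atTop, k n ≤ n - 1 ∧ |(k n : ℝ) - ((n : ℝ) - 1) * γ| ≤ C) :
    Tendsto (fun n => a ^ k n * b ^ (n - 1 - k n)) atTop (𝓝 0) := by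
  set c := γ * log a + (1 - γ) * log b
  have hbound : ∀ᶠ n : ℕ in atTop,
      log (a ^ k n * b ^ (n - 1 - k n)) ≤ ((n : ℝ) - 1) * c + C * |log a - log b| := by
    filter_upwards [hk, eventually_ge_atTop 1] with n ⟨hkn, hC⟩ hn
    have hm : ((n - 1 - k n : ℕ) : ℝ) = (n : ℝ) - 1 - k n := by
      rw [Nat.cast_sub hkn, Nat.cast_sub hn, Nat.cast_one]
    have hsplit : log (a ^ k n * b ^ (n - 1 - k n)) =
        ((n : ℝ) - 1) * c + ((k n : ℝ) - ((n : ℝ) - 1) * γ) * (log a - log b) := by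
      rw [log_mul (by positivity) (by positivity), log_pow, log_pow, hm]
      ring
    have herr : ((k n : ℝ) - ((n : ℝ) - 1) * γ) * (log a - log b) ≤ C * |log a - log b| :=
      calc _ ≤ |((k n : ℝ) - ((n : ℝ) - 1) * γ) * (log a - log b)| := le_abs_self _
        _ = |(k n : ℝ) - ((n : ℝ) - 1) * γ| * |log a - log b| := abs_mul _ _
        _ ≤ C * |log a - log b| := mul_le_mul_of_nonneg_right hC (abs_nonneg _)
    linarith
  have hlin : Tendsto (fun n : ℕ => ((n : ℝ) - 1) * c + C * |log a - log b|) atTop atBot :=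
    tendsto_atBot_add_const_right _ _ <|
      (tendsto_atTop_add_const_right _ _ tendsto_natCast_atTop_atTop).atTop_mul_const_of_neg hrate
  have hlog : Tendsto (fun n => log (a ^ k n * b ^ (n - 1 - k n))) atTop atBot :=
    tendsto_atBot_mono' atTop hbound hlin
  refine (tendsto_exp_atBot.comp hlog).congr fun n => ?_
  exact exp_log (by positivity)

lemma abs_toNat_floor_sub_le {x y : ℝ} (hx : 0 ≤ x) :
    |((⌊x⌋.toNat : ℕ) : ℝ) - y| ≤ 1 + |x - y| := by
  rw [Int.floor_toNat]
  have hle := Nat.floor_le hx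
  have hlt := Nat.lt_floor_add_one x
  rw [abs_le]
  constructor <;> linarith [neg_abs_le (x - y), le_abs_self (x - y)]

lemma toNat_floor_le_sub_one {n : ℕ} {α : ℝ} (hn : 1 ≤ n) (hα : α ≤ 1) :
    (⌊((n : ℝ) - 1) * α⌋).toNat ≤ n - 1 := by
  rw [Int.floor_toNat]
  refine Nat.floor_le_of_le ?_
  have hn' : (1 : ℝ) ≤ n := by exact_mod_cast hn
  rw [Nat.cast_sub hn, Nat.cast_one]
  nlinarith

lemma abs_toNat_floor_sub_le_of_abs_sub_le {n : ℕ} {α γ K : ℝ} (hn : 1 ≤ n) (hα : 0 ≤ α)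
    (hK : 0 ≤ K) (hαγ : |α - γ| ≤ K / n) :
    |((⌊((n : ℝ) - 1) * α⌋).toNat : ℝ) - ((n : ℝ) - 1) * γ| ≤ 1 + K := by
  have hn' : (1 : ℝ) ≤ n := by exact_mod_cast hn
  have hn1 : (0 : ℝ) ≤ n - 1 := by linarith
  refine (abs_toNat_floor_sub_le (mul_nonneg hn1 hα)).trans (add_le_add_right ?_ 1)
  rw [← mul_sub, abs_mul, abs_of_nonneg hn1]
  calc ((n : ℝ) - 1) * |α - γ| ≤ ((n : ℝ) - 1) * (K / n) := by gcongr
    _ = K - K / n := by field_simp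
    _ ≤ K := sub_le_self _ (by positivity)

lemma dphi_div_dphi {n : ℕ} {α : ℝ} (hn : 1 ≤ n) (hα : α ≤ 1) (t s : ℝ) :
    dphi n α t / dphi n α s =
      (t / s) ^ (⌊((n : ℝ) - 1) * α⌋).toNat *
        ((1 - t) / (1 - s)) ^ (n - 1 - (⌊((n : ℝ) - 1) * α⌋).toNat) := by
  have hchoose := Nat.choose_pos (toNat_floor_le_sub_one hn hα)
  have hA : (n : ℝ) * ((n - 1).choose (⌊((n : ℝ) - 1) * α⌋).toNat : ℝ) ≠ 0 := by
    have : (0 : ℝ) < n := by exact_mod_cast hn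
    positivity
  rw [dphi, dphi, mul_assoc _ (t ^ _), mul_assoc _ (s ^ _), mul_div_mul_left _ _ hA,
    mul_div_mul_comm, div_pow, div_pow]

theorem stmt6_general (γ : ℝ) (hγ : γ ∈ Set.Icc (0:ℝ) 1)
    (γseq : ℕ → ℝ) (hseq : ∀ n, γseq n ∈ Set.Icc (0:ℝ) 1)
    (hrate : ∃ K > (0:ℝ), ∃ N : ℕ, ∀ n ≥ N, |γseq n - γ| ≤ K / n)
    (t s : ℝ)
    (h : (0 < t ∧ t < s ∧ s < γ) ∨ (γ < s ∧ s < t ∧ t < 1)) :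
    Tendsto (fun n : ℕ => dphi n (γseq n) t / dphi n (γseq n) s) atTop (nhds 0) := by
  obtain ⟨K, hK, N, hN⟩ := hrate
  obtain ⟨hγ0, hγ1⟩ := hγ
  obtain ⟨ht0, ht1, hs0, hs1⟩ : 0 < t ∧ t < 1 ∧ 0 < s ∧ s < 1 := by
    rcases h with ⟨_, _, _⟩ | ⟨_, _, _⟩ <;> refine ⟨?_, ?_, ?_, ?_⟩ <;> linarith
  have hcross : (t - s) * (γ - s) < 0 := by
    rcases h with ⟨_, hts, hsγ⟩ | ⟨hγs, hst, _⟩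
    · exact mul_neg_of_neg_of_pos (by linarith) (by linarith)
    · exact mul_neg_of_pos_of_neg (by linarith) (by linarith)
  have hneg : γ * log (t / s) + (1 - γ) * log ((1 - t) / (1 - s)) < 0 :=
    (mul_log_div_add_mul_log_div_le hγ0 hγ1 ht0 ht1 hs0 hs1).trans_lt
      (div_neg_of_neg_of_pos hcross (mul_pos hs0 (sub_pos.2 hs1)))
  have hindex : ∀ᶠ n : ℕ in atTop, (⌊((n : ℝ) - 1) * γseq n⌋).toNat ≤ n - 1 ∧
      |((⌊((n : ℝ) - 1) * γseq n⌋).toNat : ℝ) - ((n : ℝ) - 1) * γ| ≤ 1 + K := by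
    filter_upwards [eventually_ge_atTop 1, eventually_ge_atTop N] with n hn hnN
    exact ⟨toNat_floor_le_sub_one hn (hseq n).2,
      abs_toNat_floor_sub_le_of_abs_sub_le hn (hseq n).1 hK.le (hN n hnN)⟩
  refine (tendsto_pow_mul_pow_atTop_nhds_zero (div_pos ht0 hs0)
    (div_pos (sub_pos.2 ht1) (sub_pos.2 hs1)) hneg hindex).congr' ?_
  filter_upwards [eventually_ge_atTop 1] with n hn
  exact (dphi_div_dphi hn (hseq n).2 t s).symm

/-- If `γ_n → γ ∈ [0,1]` with `|γ_n - γ| = O(1/n)` and `0 < t < s < γ` or `1 > t > s > γ`,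
then `φ'_{n,γ_n}(t)/φ'_{n,γ_n}(s) → 0` as `n → ∞`. -/
theorem stmt6 (γ : ℝ) (hγ : γ ∈ Set.Icc (0:ℝ) 1)
    (γseq : ℕ → ℝ) (hseq : ∀ n, γseq n ∈ Set.Icc (0:ℝ) 1)
    (htend : Tendsto γseq atTop (nhds γ))
    (hrate : ∃ K > (0:ℝ), ∃ N : ℕ, ∀ n ≥ N, |γseq n - γ| ≤ K / n)
    (t s : ℝ)
    (h : (0 < t ∧ t < s ∧ s < γ) ∨ (γ < s ∧ s < t ∧ t < 1)) :
    Tendsto (fun n : ℕ => dphi n (γseq n) t / dphi n (γseq n) s) atTop (nhds 0) :=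
  stmt6_general γ hγ γseq hseq hrate t s h
end

section
/- Let F_X, F_Y be continuous strictly increasing cdfs and A_0 = {u ∈ (0,1) : F_X^{-1}(u) > F_Y^{-1}(u)}. Fix n and a [0,1]-valued γ_n, and let A_{0,n} = {v ∈ (0,1) : F^{-1}_{X_{(1+⌊(n-1)γ_n⌋):n}}(v) > F^{-1}_{Y_{(1+⌊(n-1)γ_n⌋):n}}(v)}, where the order statistics come from iid samples of size n from F_X and F_Y respectively. Then A_{0,n} = φ_{n,γ_n}(A_0) := {φ_{n,γ_n}(u) : u ∈ A_0}. -/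
/-!
`φ_{n,γ}` is the binomial tail `t ↦ P(Bin(n, t) ≥ k)` with `k = 1 + ⌊(n-1)γ⌋`, a sum of Bernstein
polynomials whose derivative telescopes to `n · b_{n-1,k-1}(t) > 0` on `(0,1)`. Hence `φ_{n,γ}` is a
strictly increasing bijection of `[0,1]` fixing `0` and `1`. For a cdf `F` with values in `[0,1]`,
`φ(u) ≤ φ(F x) ↔ u ≤ F x`, so the quantile of `φ ∘ F` at `φ(u)` is the quantile of `F` at `u`,
and `A_{0,n}` is the image of `A₀` under `φ_{n,γ}`.
-/

open MeasureTheory Set Filter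

/-- Left-continuous inverse (quantile function) of a cdf. -/
noncomputable def linv (F : ℝ → ℝ) (u : ℝ) : ℝ := sInf {x : ℝ | u ≤ F x}

open Polynomial

noncomputable def binomialTail (n k : ℕ) : ℝ[X] :=
  ∑ j ∈ Finset.Icc k n, bernsteinPolynomial ℝ n j

lemma derivative_binomialTail {n k : ℕ} (hk : 1 ≤ k) (hkn : k ≤ n) :
    derivative (binomialTail n k) = n * bernsteinPolynomial ℝ (n - 1) (k - 1) := by
  have hterm : ∀ j ∈ Finset.Icc k n, derivative (bernsteinPolynomial ℝ n j) =
      -n * bernsteinPolynomial ℝ (n - 1) (j + 1 - 1) -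
        -n * bernsteinPolynomial ℝ (n - 1) (j - 1) := by
    intro j hj
    obtain ⟨i, rfl⟩ : ∃ i, j = i + 1 := ⟨j - 1, by grind⟩
    rw [bernsteinPolynomial.derivative_succ]
    simp only [Nat.add_sub_cancel]
    ring
  rw [binomialTail, derivative_sum, Finset.sum_congr rfl hterm,
    Finset.sum_Icc_sub hkn (fun j => -n * bernsteinPolynomial ℝ (n - 1) (j - 1)),
    Nat.add_sub_cancel, bernsteinPolynomial.eq_zero_of_lt ℝ (by omega : n - 1 < n)]
  ring

lemma bernsteinPolynomial_eval_pos {n ν : ℕ} (hν : ν ≤ n) {t : ℝ} (ht : t ∈ Ioo (0 : ℝ) 1) :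
    0 < (bernsteinPolynomial ℝ n ν).eval t := by
  have hchoose : (0 : ℝ) < n.choose ν := by exact_mod_cast Nat.choose_pos hν
  have h1t : 0 < 1 - t := by linarith [ht.2]
  simp only [bernsteinPolynomial, eval_mul, eval_pow, eval_natCast, eval_sub, eval_one, eval_X]
  exact mul_pos (mul_pos hchoose (pow_pos ht.1 _)) (pow_pos h1t _)

lemma binomialTail_strictMonoOn {n k : ℕ} (hk : 1 ≤ k) (hkn : k ≤ n) :
    StrictMonoOn (binomialTail n k).eval (Icc 0 1) := by
  refine strictMonoOn_of_deriv_pos (convex_Icc 0 1) (Polynomial.continuousOn _) fun t ht => ?_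
  rw [interior_Icc] at ht
  rw [Polynomial.deriv, derivative_binomialTail hk hkn, eval_mul, eval_natCast]
  exact mul_pos (by exact_mod_cast hk.trans hkn) (bernsteinPolynomial_eval_pos (by omega) ht)

lemma binomialTail_eval_zero {n k : ℕ} (hk : 1 ≤ k) : (binomialTail n k).eval 0 = 0 := by
  rw [binomialTail, eval_finsetSum]
  refine Finset.sum_eq_zero fun j hj => ?_
  rw [bernsteinPolynomial.eval_at_0, if_neg (by grind)]

lemma binomialTail_eval_one {n k : ℕ} (hkn : k ≤ n) : (binomialTail n k).eval 1 = 1 := by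
  simp [binomialTail, eval_finsetSum, bernsteinPolynomial.eval_at_1, hkn]

lemma binomialTail_image_Ioo {n k : ℕ} (hk : 1 ≤ k) (hkn : k ≤ n) :
    (binomialTail n k).eval '' Ioo 0 1 = Ioo 0 1 := by
  rw [(Polynomial.continuousOn _).image_Ioo_of_strictMonoOn zero_le_one
    (binomialTail_strictMonoOn hk hkn), binomialTail_eval_zero hk, binomialTail_eval_one hkn]

lemma phi_eq_eval_s8 (n : ℕ) (α : ℝ) :
    phi n α = (binomialTail n (1 + (⌊((n : ℝ) - 1) * α⌋).toNat)).eval := by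
  ext t
  simp [phi, binomialTail, eval_finsetSum, bernsteinPolynomial]

lemma one_add_toNat_floor_le {n : ℕ} (hn : 1 ≤ n) {γ : ℝ} (hγ : γ ≤ 1) :
    1 + (⌊((n : ℝ) - 1) * γ⌋).toNat ≤ n := by
  have hle : ((n : ℝ) - 1) * γ ≤ ((n - 1 : ℕ) : ℝ) := by
    rw [Nat.cast_sub hn, Nat.cast_one]
    exact mul_le_of_le_one_right (sub_nonneg.mpr (Nat.one_le_cast.mpr hn)) hγ
  have hfloor := (Int.floor_le_floor hle).trans (Int.floor_natCast _).le
  omega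

lemma linv_comp_apply {g : ℝ → ℝ} {s : Set ℝ} (hg : StrictMonoOn g s) {F : ℝ → ℝ}
    (hF : ∀ x, F x ∈ s) {u : ℝ} (hu : u ∈ s) :
    linv (fun x => g (F x)) (g u) = linv F u := by
  simp only [linv, hg.le_iff_le hu (hF _)]

lemma Monotone.mem_Icc_of_tendsto {F : ℝ → ℝ} (hF : Monotone F) (h0 : Tendsto F atBot (nhds 0))
    (h1 : Tendsto F atTop (nhds 1)) (x : ℝ) : F x ∈ Icc 0 1 :=
  ⟨hF.le_of_tendsto h0 x, hF.ge_of_tendsto h1 x⟩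

lemma sep_linv_comp_lt_eq_image {g : ℝ → ℝ} {s t : Set ℝ} (hg : StrictMonoOn g s) (hts : t ⊆ s)
    (himage : g '' t = t) {F G : ℝ → ℝ} (hF : ∀ x, F x ∈ s) (hG : ∀ x, G x ∈ s) :
    {v ∈ t | linv (fun x => g (G x)) v < linv (fun x => g (F x)) v}
      = g '' {u ∈ t | linv G u < linv F u} := by
  calc {v ∈ t | linv (fun x => g (G x)) v < linv (fun x => g (F x)) v}
      = g '' t ∩ {v | linv (fun x => g (G x)) v < linv (fun x => g (F x)) v} := by
        rw [himage]; rfl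
    _ = g '' (t ∩ g ⁻¹' {v | linv (fun x => g (G x)) v < linv (fun x => g (F x)) v}) :=
        (image_inter_preimage ..).symm
    _ = g '' {u ∈ t | linv G u < linv F u} := by
        congr 1
        ext u
        refine and_congr_right fun hu => ?_
        rw [mem_preimage, mem_ofPred_eq, linv_comp_apply hg hG (hts hu),
          linv_comp_apply hg hF (hts hu)]

theorem stmt8_general (FX FY : ℝ → ℝ)
    (hFXm : StrictMono FX) (hFYm : StrictMono FY)
    (hFX0 : Tendsto FX atBot (nhds 0)) (hFX1 : Tendsto FX atTop (nhds 1))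
    (hFY0 : Tendsto FY atBot (nhds 0)) (hFY1 : Tendsto FY atTop (nhds 1))
    (n : ℕ) (hn : 1 ≤ n) (γn : ℝ) (hγn : γn ∈ Set.Icc (0:ℝ) 1) :
    {v ∈ Set.Ioo (0:ℝ) 1 |
        linv (fun x => phi n γn (FY x)) v < linv (fun x => phi n γn (FX x)) v}
      = phi n γn '' {u ∈ Set.Ioo (0:ℝ) 1 | linv FY u < linv FX u} := by
  have hkn := one_add_toNat_floor_le hn hγn.2
  have hk : 1 ≤ 1 + (⌊((n : ℝ) - 1) * γn⌋).toNat := Nat.le_add_right 1 _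
  rw [phi_eq_eval_s8]
  exact sep_linv_comp_lt_eq_image (binomialTail_strictMonoOn hk hkn) Ioo_subset_Icc_self
    (binomialTail_image_Ioo hk hkn) (hFXm.monotone.mem_Icc_of_tendsto hFX0 hFX1)
    (hFYm.monotone.mem_Icc_of_tendsto hFY0 hFY1)

/-- With `F_{X_{(1+⌊(n-1)γₙ⌋):n}} = φ_{n,γₙ} ∘ F_X` and similarly for `Y`,
`A_{0,n} = {v ∈ (0,1) : F⁻¹_{X_{(·):n}}(v) > F⁻¹_{Y_{(·):n}}(v)}` equals
`φ_{n,γₙ}(A₀)` where `A₀ = {u ∈ (0,1) : F_X⁻¹(u) > F_Y⁻¹(u)}`. -/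
theorem stmt8 (FX FY : ℝ → ℝ)
    (hFXc : Continuous FX) (hFYc : Continuous FY)
    (hFXm : StrictMono FX) (hFYm : StrictMono FY)
    (hFX0 : Tendsto FX atBot (nhds 0)) (hFX1 : Tendsto FX atTop (nhds 1))
    (hFY0 : Tendsto FY atBot (nhds 0)) (hFY1 : Tendsto FY atTop (nhds 1))
    (n : ℕ) (hn : 1 ≤ n) (γn : ℝ) (hγn : γn ∈ Set.Icc (0:ℝ) 1) :
    {v ∈ Set.Ioo (0:ℝ) 1 |
        linv (fun x => phi n γn (FY x)) v < linv (fun x => phi n γn (FX x)) v}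
      = phi n γn '' {u ∈ Set.Ioo (0:ℝ) 1 | linv FY u < linv FX u} :=
  stmt8_general FX FY hFXm hFYm hFX0 hFX1 hFY0 hFY1 n hn γn hγn
end

section
/- Let {X_t}, {Y_t}, {Z_t} (t ∈ T, T ⊆ ℝ unbounded above) be stochastic processes whose marginals have finite second moments. Suppose ε(F_{X_t},F_{Y_t}) → 0 and ε(F_{Y_t},F_{Z_t}) → 0 as t → ∞, and that W₂²(F_{X_t},F_{Y_t}) = O(W₂²(F_{X_t},F_{Z_t})) and W₂²(F_{Y_t},F_{Z_t}) = O(W₂²(F_{X_t},F_{Z_t})). Then ε(F_{X_t},F_{Z_t}) → 0 as t → ∞. (Transitivity of departure-based asymptotic stochastic order under a comparability condition on Wasserstein distances.) -/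
/-!
Pointwise `(a - c)⁺ ≤ (a - b)⁺ + (b - c)⁺`, hence
`((a - c)⁺)² ≤ 2((a - b)⁺)² + 2((b - c)⁺)²`. Applied to the quantile functions and integrated
over `(0, 1)`, the numerators of `ε` satisfy `N(X, Z) ≤ 2 N(X, Y) + 2 N(Y, Z)`. Since
`N(X, Y) = ε(X, Y) W₂²(X, Y) ≤ C₁ ε(X, Y) W₂²(X, Z)` and likewise for `(Y, Z)`, dividing by
`W₂²(X, Z)` gives `ε(X, Z) ≤ 2 C₁ ε(X, Y) + 2 C₂ ε(Y, Z)`.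
-/

open MeasureTheory Set Filter

/-- Squared L₂-Wasserstein distance between two cdfs, via quantile functions. -/
noncomputable def W2sq (F G : ℝ → ℝ) : ℝ :=
  ∫ u in Set.Ioo (0:ℝ) 1, (linv F u - linv G u) ^ 2

/-- Measure of departure from the usual stochastic order, with the convention
`ε = 0` when `W₂ = 0`. -/
noncomputable def eps (F G : ℝ → ℝ) : ℝ :=
  if W2sq F G = 0 then 0
  else (∫ u in {u ∈ Set.Ioo (0:ℝ) 1 | linv G u < linv F u},
          (linv F u - linv G u) ^ 2) / W2sq F G

theorem Set.OrdConnected.measurable_of_monotoneOn_of_eqOn_compl {α β : Type*}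
    [LinearOrder α] [TopologicalSpace α] [OrderTopology α] [MeasurableSpace α]
    [OpensMeasurableSpace α] [LinearOrder β] [TopologicalSpace β] [OrderTopology β]
    [SecondCountableTopology β] [MeasurableSpace β] [BorelSpace β]
    {s : Set α} (hs : s.OrdConnected) {f : α → β} (hf : MonotoneOn f s) {c : β}
    (hc : EqOn f (fun _ => c) sᶜ) : Measurable f := by
  refine measurable_of_Iio fun a => ?_
  have hlower : (s ∩ f ⁻¹' Iio a).OrdConnected :=
    ⟨fun x hx y hy z hz =>
      have hzs : z ∈ s := hs.out hx.1 hy.1 hz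
      ⟨hzs, (hf hzs hy.1 hz.2).trans_lt hy.2⟩⟩
  have hcompl : sᶜ ∩ f ⁻¹' Iio a = sᶜ ∩ {_x | c < a} := by
    ext x
    simp only [mem_inter_iff, mem_compl_iff, mem_preimage, mem_Iio, mem_ofPred_eq]
    exact and_congr_right fun hx => by rw [hc hx]
  rw [← inter_union_compl (f ⁻¹' Iio a) s, inter_comm, inter_comm _ sᶜ, hcompl]
  exact hlower.measurableSet.union (hs.measurableSet.compl.inter (MeasurableSet.const _))

-- `linv F` is monotone where `{x | u ≤ F x}` is nonempty and bounded below; elsewhere `sInf`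
-- returns the junk value `0`.
theorem measurable_linv (F : ℝ → ℝ) : Measurable (linv F) := by
  set S : ℝ → Set ℝ := fun u => {x | u ≤ F x}
  have hS : Antitone S := fun _ _ huv _ hx => huv.trans hx
  refine Set.OrdConnected.measurable_of_monotoneOn_of_eqOn_compl (c := 0)
    (s := {u | (S u).Nonempty ∧ BddBelow (S u)})
    ⟨fun x hx y hy _ hz => ⟨hy.1.mono (hS hz.2), hx.2.mono (hS hz.1)⟩⟩
    (fun u hu _ hv huv => csInf_le_csInf hu.2 hv.1 (hS huv)) fun u hu => ?_
  rcases not_and_or.1 hu with hne | hbdd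
  · exact (congrArg sInf (not_nonempty_iff_eq_empty.1 hne)).trans Real.sInf_empty
  · exact Real.sInf_of_not_bddBelow hbdd

noncomputable def posW2sq (F G : ℝ → ℝ) : ℝ :=
  ∫ u in {u ∈ Ioo (0:ℝ) 1 | linv G u < linv F u}, (linv F u - linv G u) ^ 2

theorem eps_eq (F G : ℝ → ℝ) :
    eps F G = if W2sq F G = 0 then 0 else posW2sq F G / W2sq F G := rfl

theorem W2sq_nonneg (F G : ℝ → ℝ) : 0 ≤ W2sq F G :=
  setIntegral_nonneg measurableSet_Ioo fun _ _ => sq_nonneg _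

theorem posW2sq_nonneg (F G : ℝ → ℝ) : 0 ≤ posW2sq F G :=
  integral_nonneg fun _ => sq_nonneg _

theorem eps_nonneg (F G : ℝ → ℝ) : 0 ≤ eps F G := by
  rw [eps_eq]
  split_ifs
  exacts [le_rfl, div_nonneg (posW2sq_nonneg F G) (W2sq_nonneg F G)]

theorem eps_of_W2sq_eq_zero {F G : ℝ → ℝ} (h : W2sq F G = 0) : eps F G = 0 := if_pos h

theorem posW2sq_eq_integral_max_sq (F G : ℝ → ℝ) :
    posW2sq F G = ∫ u in Ioo (0:ℝ) 1, max (linv F u - linv G u) 0 ^ 2 := by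
  have hA : MeasurableSet {u ∈ Ioo (0:ℝ) 1 | linv G u < linv F u} :=
    measurableSet_Ioo.inter (measurableSet_lt (measurable_linv G) (measurable_linv F))
  rw [setIntegral_eq_of_subset_of_forall_sdiff_eq_zero measurableSet_Ioo (sep_subset _ _)
    fun u hu => ?_]
  · exact setIntegral_congr_fun hA fun u hu => by
      rw [max_eq_left (sub_nonneg.2 hu.2.le)]
  · have : linv F u ≤ linv G u := not_lt.1 fun h => hu.2 ⟨hu.1, h⟩
    rw [max_eq_right (sub_nonpos.2 this), sq, mul_zero]

theorem max_zero_sq_le_sq (x : ℝ) : max x 0 ^ 2 ≤ x ^ 2 := by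
  rw [← sq_abs x]
  exact pow_le_pow_left₀ (le_max_right _ _) (max_le (le_abs_self x) (abs_nonneg x)) 2

theorem max_sub_zero_le_add (a b c : ℝ) : max (a - c) 0 ≤ max (a - b) 0 + max (b - c) 0 :=
  max_le (by linarith [le_max_left (a - b) 0, le_max_left (b - c) 0])
    (add_nonneg (le_max_right _ _) (le_max_right _ _))

def FiniteSecondMoment (F : ℝ → ℝ) : Prop :=
  IntegrableOn (fun u => linv F u ^ 2) (Ioo 0 1)

section FiniteSecondMoment

variable {F G : ℝ → ℝ}

theorem FiniteSecondMoment.memLp_linv (hF : FiniteSecondMoment F) :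
    MemLp (linv F) 2 (volume.restrict (Ioo (0:ℝ) 1)) :=
  (memLp_two_iff_integrable_sq (measurable_linv F).aestronglyMeasurable).2 hF

theorem posW2sq_le_W2sq (hF : FiniteSecondMoment F) (hG : FiniteSecondMoment G) :
    posW2sq F G ≤ W2sq F G := by
  rw [posW2sq_eq_integral_max_sq]
  exact integral_mono_of_nonneg (ae_of_all _ fun _ => sq_nonneg _)
    (hF.memLp_linv.sub hG.memLp_linv).integrable_sq
    (ae_of_all _ fun _ => max_zero_sq_le_sq _)

theorem posW2sq_le_eps_mul_W2sq (hF : FiniteSecondMoment F) (hG : FiniteSecondMoment G) :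
    posW2sq F G ≤ eps F G * W2sq F G := by
  rw [eps_eq]
  split_ifs with h
  · simpa [h] using posW2sq_le_W2sq hF hG
  · rw [div_mul_cancel₀ _ h]

theorem integrableOn_max_sub_linv_sq (hF : FiniteSecondMoment F) (hG : FiniteSecondMoment G) :
    IntegrableOn (fun u => max (linv F u - linv G u) 0 ^ 2) (Ioo (0:ℝ) 1) :=
  (hF.memLp_linv.sub hG.memLp_linv).pos_part.integrable_sq

theorem posW2sq_le_two_mul_add {H : ℝ → ℝ} (hF : FiniteSecondMoment F)
    (hG : FiniteSecondMoment G) (hH : FiniteSecondMoment H) :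
    posW2sq F H ≤ 2 * (posW2sq F G + posW2sq G H) := by
  have hFG := integrableOn_max_sub_linv_sq hF hG
  have hGH := integrableOn_max_sub_linv_sq hG hH
  simp only [posW2sq_eq_integral_max_sq]
  rw [← integral_add hFG hGH, ← integral_const_mul]
  refine integral_mono_of_nonneg (ae_of_all _ fun _ => sq_nonneg _)
    ((hFG.add hGH).const_mul 2) (ae_of_all _ fun u => ?_)
  calc max (linv F u - linv H u) 0 ^ 2
      ≤ (max (linv F u - linv G u) 0 + max (linv G u - linv H u) 0) ^ 2 :=
        pow_le_pow_left₀ (le_max_right _ _) (max_sub_zero_le_add _ _ _) 2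
    _ ≤ _ := add_sq_le

theorem eps_le_of_W2sq_le {H : ℝ → ℝ} {C₁ C₂ : ℝ} (hF : FiniteSecondMoment F)
    (hG : FiniteSecondMoment G) (hH : FiniteSecondMoment H)
    (hFG : W2sq F G ≤ C₁ * W2sq F H) (hGH : W2sq G H ≤ C₂ * W2sq F H) :
    eps F H ≤ 2 * C₁ * eps F G + 2 * C₂ * eps G H := by
  by_cases hFH : W2sq F H = 0
  · have hFG0 : W2sq F G = 0 := le_antisymm (by simpa [hFH] using hFG) (W2sq_nonneg F G)
    have hGH0 : W2sq G H = 0 := le_antisymm (by simpa [hFH] using hGH) (W2sq_nonneg G H)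
    simp [eps_of_W2sq_eq_zero, hFH, hFG0, hGH0]
  rw [eps_eq, if_neg hFH, div_le_iff₀ ((W2sq_nonneg F H).lt_of_ne' hFH)]
  calc posW2sq F H ≤ 2 * (posW2sq F G + posW2sq G H) := posW2sq_le_two_mul_add hF hG hH
    _ ≤ 2 * (eps F G * W2sq F G + eps G H * W2sq G H) := by
        gcongr
        exacts [posW2sq_le_eps_mul_W2sq hF hG, posW2sq_le_eps_mul_W2sq hG hH]
    _ ≤ 2 * (eps F G * (C₁ * W2sq F H) + eps G H * (C₂ * W2sq F H)) := by
        gcongr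
        exacts [eps_nonneg F G, eps_nonneg G H]
    _ = (2 * C₁ * eps F G + 2 * C₂ * eps G H) * W2sq F H := by ring

end FiniteSecondMoment

theorem stmt10_general (T : Set ℝ)
    (FX FY FZ : ℝ → ℝ → ℝ)
    (hmom : ∀ t ∈ T,
      IntegrableOn (fun u => (linv (FX t) u) ^ 2) (Set.Ioo (0:ℝ) 1) ∧
      IntegrableOn (fun u => (linv (FY t) u) ^ 2) (Set.Ioo (0:ℝ) 1) ∧
      IntegrableOn (fun u => (linv (FZ t) u) ^ 2) (Set.Ioo (0:ℝ) 1))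
    (h1 : Tendsto (fun t => eps (FX t) (FY t)) (atTop ⊓ Filter.principal T) (nhds 0))
    (h2 : Tendsto (fun t => eps (FY t) (FZ t)) (atTop ⊓ Filter.principal T) (nhds 0))
    (hO1 : ∃ C > (0:ℝ), ∀ᶠ t in atTop ⊓ Filter.principal T,
      W2sq (FX t) (FY t) ≤ C * W2sq (FX t) (FZ t))
    (hO2 : ∃ C > (0:ℝ), ∀ᶠ t in atTop ⊓ Filter.principal T,
      W2sq (FY t) (FZ t) ≤ C * W2sq (FX t) (FZ t)) :
    Tendsto (fun t => eps (FX t) (FZ t)) (atTop ⊓ Filter.principal T) (nhds 0) := by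
  obtain ⟨C₁, -, hXY⟩ := hO1
  obtain ⟨C₂, -, hYZ⟩ := hO2
  have hbound : Tendsto (fun t => 2 * C₁ * eps (FX t) (FY t) + 2 * C₂ * eps (FY t) (FZ t))
      (atTop ⊓ Filter.principal T) (nhds 0) := by
    simpa using (h1.const_mul (2 * C₁)).add (h2.const_mul (2 * C₂))
  refine squeeze_zero' (Eventually.of_forall fun t => eps_nonneg _ _) ?_ hbound
  filter_upwards [hXY, hYZ, mem_inf_of_right (mem_principal_self T)] with t hXYt hYZt ht
  obtain ⟨hX, hY, hZ⟩ := hmom t ht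
  exact eps_le_of_W2sq_le hX hY hZ hXYt hYZt

/-- Transitivity of the departure-based asymptotic stochastic order under the
comparability conditions `W₂²(F_{X_t},F_{Y_t}) = O(W₂²(F_{X_t},F_{Z_t}))` and
`W₂²(F_{Y_t},F_{Z_t}) = O(W₂²(F_{X_t},F_{Z_t}))`, for processes indexed by an
unbounded-above `T ⊆ ℝ` whose marginals have finite second moments. -/
theorem stmt10 (T : Set ℝ) (hT : ¬ BddAbove T)
    (FX FY FZ : ℝ → ℝ → ℝ)
    (hmom : ∀ t ∈ T,
      IntegrableOn (fun u => (linv (FX t) u) ^ 2) (Set.Ioo (0:ℝ) 1) ∧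
      IntegrableOn (fun u => (linv (FY t) u) ^ 2) (Set.Ioo (0:ℝ) 1) ∧
      IntegrableOn (fun u => (linv (FZ t) u) ^ 2) (Set.Ioo (0:ℝ) 1))
    (h1 : Tendsto (fun t => eps (FX t) (FY t)) (atTop ⊓ Filter.principal T) (nhds 0))
    (h2 : Tendsto (fun t => eps (FY t) (FZ t)) (atTop ⊓ Filter.principal T) (nhds 0))
    (hO1 : ∃ C > (0:ℝ), ∀ᶠ t in atTop ⊓ Filter.principal T,
      W2sq (FX t) (FY t) ≤ C * W2sq (FX t) (FZ t))
    (hO2 : ∃ C > (0:ℝ), ∀ᶠ t in atTop ⊓ Filter.principal T,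
      W2sq (FY t) (FZ t) ≤ C * W2sq (FX t) (FZ t)) :
    Tendsto (fun t => eps (FX t) (FZ t)) (atTop ⊓ Filter.principal T) (nhds 0) :=
  stmt10_general T FX FY FZ hmom h1 h2 hO1 hO2
end

section
/- Key inequality for transitivity: let F, G, H be cdfs with quantile functions F^{-1}, G^{-1}, H^{-1}, and set A = {u ∈ (0,1) : F^{-1}(u) > G^{-1}(u)}, B = {u : G^{-1}(u) > H^{-1}(u)}, C = {u : F^{-1}(u) > H^{-1}(u)}. Then ∫_C (F^{-1}(u) − H^{-1}(u))² du ≤ 3[∫_B (G^{-1}(u) − H^{-1}(u))² du + ∫_A (F^{-1}(u) − G^{-1}(u))² du]. -/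
/-! Since `C ⊆ A ∪ B`, at a point of `C` either `F⁻¹ - H⁻¹` is dominated by one of the two other
differences, or `F⁻¹ - H⁻¹ = (F⁻¹ - G⁻¹) + (G⁻¹ - H⁻¹)` with both summands positive, and then
`(x + y)² ≤ 2 (x² + y²)`. Integrating this pointwise bound gives the inequality even with constant 2.
The only analytic input is measurability of a quantile function: it is monotone on the
order-connected set of levels whose defining set is nonempty and bounded below, and `0` elsewhere. -/

open MeasureTheory Set Filter

theorem MonotoneOn.measurable_of_eqOn_compl {α β : Type*}
    [LinearOrder α] [TopologicalSpace α] [OrderTopology α] [SecondCountableTopology α]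
    [MeasurableSpace α] [BorelSpace α]
    [LinearOrder β] [TopologicalSpace β] [OrderTopology β] [MeasurableSpace β] [BorelSpace β]
    {f : β → α} {s : Set β} [hs : OrdConnected s] (hf : MonotoneOn f s) {c : α}
    (hc : EqOn f (fun _ => c) sᶜ) : Measurable f := by
  refine measurable_of_restrict_of_restrict_compl hs.measurableSet
    (Monotone.measurable fun x y hxy => hf x.2 y.2 hxy) ?_
  rw [show sᶜ.domRestrict f = fun _ => c from funext fun x => hc x.2]
  exact measurable_const

theorem ite_sq_sub_le_two_mul (a b c : ℝ) :
    (if c < a then (a - c) ^ 2 else 0)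
      ≤ 2 * ((if c < b then (b - c) ^ 2 else 0) + if b < a then (a - b) ^ 2 else 0) := by
  split_ifs <;> nlinarith [sq_nonneg (a + c - 2 * b)]

theorem setIntegral_sq_sub_le {α : Type*} [MeasurableSpace α] {μ : Measure α} {s : Set α}
    {f g h : α → ℝ} (hf : Measurable f) (hg : Measurable g) (hh : Measurable h)
    (hfg : IntegrableOn (fun u => (f u - g u) ^ 2) s μ)
    (hgh : IntegrableOn (fun u => (g u - h u) ^ 2) s μ) :
    ∫ u in {u ∈ s | h u < f u}, (f u - h u) ^ 2 ∂μ
      ≤ 2 * ((∫ u in {u ∈ s | h u < g u}, (g u - h u) ^ 2 ∂μ)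
          + ∫ u in {u ∈ s | g u < f u}, (f u - g u) ^ 2 ∂μ) := by
  have hA := measurableSet_lt hg hf
  have hB := measurableSet_lt hh hg
  have hC := measurableSet_lt hh hf
  have hiA := (hfg.indicator hA).const_mul 2
  have hiB := (hgh.indicator hB).const_mul 2
  rw [← inter_ofPred_eq_sep, ← inter_ofPred_eq_sep, ← inter_ofPred_eq_sep,
    ← setIntegral_indicator hC, ← setIntegral_indicator hB, ← setIntegral_indicator hA, mul_add,
    ← integral_const_mul, ← integral_const_mul, ← integral_add hiB hiA]
  refine integral_mono_of_nonneg (ae_of_all _ fun u => indicator_nonneg (fun _ _ => sq_nonneg _) u)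
    (hiB.add hiA) (ae_of_all _ fun u => ?_)
  simpa only [indicator_apply, mem_ofPred_eq, mul_add] using ite_sq_sub_le_two_mul (f u) (g u) (h u)

theorem stmt11_general (F G H : ℝ → ℝ)
    (hFG : IntegrableOn (fun u => (linv F u - linv G u) ^ 2) (Set.Ioo (0:ℝ) 1))
    (hGH : IntegrableOn (fun u => (linv G u - linv H u) ^ 2) (Set.Ioo (0:ℝ) 1)) :
    (∫ u in {u ∈ Set.Ioo (0:ℝ) 1 | linv H u < linv F u}, (linv F u - linv H u) ^ 2)
      ≤ 3 * ((∫ u in {u ∈ Set.Ioo (0:ℝ) 1 | linv H u < linv G u},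
                (linv G u - linv H u) ^ 2)
           + (∫ u in {u ∈ Set.Ioo (0:ℝ) 1 | linv G u < linv F u},
                (linv F u - linv G u) ^ 2)) := by
  exact (setIntegral_sq_sub_le (measurable_linv F) (measurable_linv G) (measurable_linv H) hFG
    hGH).trans (mul_le_mul_of_nonneg_right (by norm_num) (by positivity))

/-- Key inequality for transitivity: with `A = {u ∈ (0,1) : F⁻¹(u) > G⁻¹(u)}`,
`B = {u : G⁻¹(u) > H⁻¹(u)}`, `C = {u : F⁻¹(u) > H⁻¹(u)}`,
`∫_C (F⁻¹ − H⁻¹)² ≤ 3[∫_B (G⁻¹ − H⁻¹)² + ∫_A (F⁻¹ − G⁻¹)²]`. -/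
theorem stmt11 (F G H : ℝ → ℝ)
    (hFG : IntegrableOn (fun u => (linv F u - linv G u) ^ 2) (Set.Ioo (0:ℝ) 1))
    (hGH : IntegrableOn (fun u => (linv G u - linv H u) ^ 2) (Set.Ioo (0:ℝ) 1))
    (hFH : IntegrableOn (fun u => (linv F u - linv H u) ^ 2) (Set.Ioo (0:ℝ) 1)) :
    (∫ u in {u ∈ Set.Ioo (0:ℝ) 1 | linv H u < linv F u}, (linv F u - linv H u) ^ 2)
      ≤ 3 * ((∫ u in {u ∈ Set.Ioo (0:ℝ) 1 | linv H u < linv G u},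
                (linv G u - linv H u) ^ 2)
           + (∫ u in {u ∈ Set.Ioo (0:ℝ) 1 | linv G u < linv F u},
                (linv F u - linv G u) ^ 2)) :=
  stmt11_general F G H hFG hGH
end

section
/- Let γ_{i,n} → γ_i with |γ_{i,n}−γ_i| = O(1/n) for i = 1,…,p, where 0 ≤ γ_1 < γ_2 < ⋯ < γ_p ≤ 1, let α_1,…,α_p ∈ (0,1) with Σα_i = 1, and set φ_{n,𝛂,𝛄_n}(u) = Σ_{i=1}^p α_i φ_{n,γ_{i,n}}(u). Then for every ε > 0 there exists N ∈ ℕ such that for all n ≥ N the third derivative φ'''_{n,𝛂,𝛄_n}(u) ≥ 0 for all u ∈ [0,1] \ ∪_{i=1}^p (γ_i−ε, γ_i+ε); i.e., φ'_{n,𝛂,𝛄_n} is convex on the complement of ε-neighborhoods of the γ_i. The key computation: φ'''_{n,γ}(u) = n(n−1)(n−2)C(n−1,m)u^{m−2}(1−u)^{n−m−3}(u−α_n)(u−β_n) with m = ⌊(n−1)γ⌋, where α_n, β_n are the roots of u² − (m/(n−2))(1 + (n−3)/(n−1))u + m(m−1)/((n−1)(n−2)) = 0, and both roots converge to γ as n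 → ∞. -/
/-! With `m = ⌊(n - 1)γ⌋` and `K = n - 1 - m`, `φ'_{n,γ}(u)` is a positive multiple of
`u^m (1 - u)^K`, and `u²(1 - u)² (u^m (1 - u)^K)'' = u^m (1 - u)^K Q(u)` with
`Q(u) = (m + K)(m + K - 1)(u - m/(m + K))² - mK/(m + K)`. As `mK/(m + K) ≤ (m + K)/4`, the third
derivative of `φ_{n,γ}` is nonnegative wherever `(n - 2)(u - m/(n - 1))² > 1/4`. Since `m/(n - 1)`
is within `1/(n - 1)` of `γ_{i,n}`, which tends to `γ_i`, this holds for large `n` at every `u`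
at distance at least `ε` from all the `γ_i`, and the mixture is a positive combination. -/

open MeasureTheory Set Filter

def bernsteinMonomial (M K : ℕ) (t : ℝ) : ℝ := t ^ M * (1 - t) ^ K

def bernsteinQuadratic (M K : ℕ) (u : ℝ) : ℝ :=
  M * (M - 1) * (1 - u) ^ 2 - 2 * M * K * u * (1 - u) + K * (K - 1) * u ^ 2

lemma hasDerivAt_bernsteinMonomial (M K : ℕ) (u : ℝ) :
    HasDerivAt (bernsteinMonomial M K)
      (M * bernsteinMonomial (M - 1) K u - K * bernsteinMonomial M (K - 1) u) u := by
  have h := (hasDerivAt_pow M u).fun_mul (((hasDerivAt_id' u).const_sub 1).fun_pow K)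
  unfold bernsteinMonomial
  exact h.congr_deriv (by ring)

lemma deriv_bernsteinMonomial (M K : ℕ) :
    deriv (bernsteinMonomial M K) =
      fun u => M * bernsteinMonomial (M - 1) K u - K * bernsteinMonomial M (K - 1) u :=
  funext fun u => (hasDerivAt_bernsteinMonomial M K u).deriv

lemma deriv_deriv_bernsteinMonomial (M K : ℕ) (u : ℝ) :
    deriv (deriv (bernsteinMonomial M K)) u =
      M * ((M - 1 : ℕ) * bernsteinMonomial (M - 1 - 1) K u
          - K * bernsteinMonomial (M - 1) (K - 1) u)
        - K * (M * bernsteinMonomial (M - 1) (K - 1) u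
          - (K - 1 : ℕ) * bernsteinMonomial M (K - 1 - 1) u) := by
  rw [deriv_bernsteinMonomial]
  exact (((hasDerivAt_bernsteinMonomial _ _ u).const_mul _).sub
    ((hasDerivAt_bernsteinMonomial _ _ u).const_mul _)).deriv

lemma sq_mul_deriv_deriv_bernsteinMonomial (M K : ℕ) (u : ℝ) :
    (u * (1 - u)) ^ 2 * deriv (deriv (bernsteinMonomial M K)) u =
      bernsteinMonomial M K u * bernsteinQuadratic M K u := by
  rw [deriv_deriv_bernsteinMonomial]
  rcases M with _ | _ | M <;> rcases K with _ | _ | K <;>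
    simp only [bernsteinMonomial, bernsteinQuadratic, Nat.add_sub_cancel, Nat.zero_sub] <;>
    push_cast <;> ring

lemma continuous_deriv_deriv_bernsteinMonomial (M K : ℕ) :
    Continuous (deriv (deriv (bernsteinMonomial M K))) := by
  simp only [funext (deriv_deriv_bernsteinMonomial M K), bernsteinMonomial]
  fun_prop

lemma bernsteinQuadratic_pos {M K : ℕ} {u : ℝ} (hMK : 0 < M + K)
    (hu : 1 / 4 < ((M : ℝ) + K - 1) * (u - M / (M + K)) ^ 2) :
    0 < bernsteinQuadratic M K u := by
  have hs : (0 : ℝ) < M + K := by exact_mod_cast hMK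
  have hQ : bernsteinQuadratic M K u
      = (M + K) * ((M + K - 1) * (u - M / (M + K)) ^ 2) - M * K / (M + K) := by
    unfold bernsteinQuadratic; field_simp; ring
  have hAMGM : M * K / (M + K) ≤ ((M : ℝ) + K) / 4 := by
    rw [div_le_div_iff₀ hs (by norm_num)]
    nlinarith [sq_nonneg ((M : ℝ) - K)]
  rw [hQ]
  nlinarith [mul_lt_mul_of_pos_left hu hs]

lemma deriv_deriv_bernsteinMonomial_nonneg {M K : ℕ} {u : ℝ} (hu : u ∈ Icc 0 1)
    (hQ : 0 < bernsteinQuadratic M K u) : 0 ≤ deriv (deriv (bernsteinMonomial M K)) u := by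
  -- At `u = 0` or `u = 1` the identity reads `0 = 0`; there the sign comes from continuity,
  -- `{Q > 0}` being open.
  have hinterior : {v | 0 < bernsteinQuadratic M K v} ∩ Ioo 0 1 ⊆
      {v | 0 ≤ deriv (deriv (bernsteinMonomial M K)) v} := by
    rintro v ⟨hQv, hv0, hv1⟩
    have hprod : 0 < bernsteinMonomial M K v * bernsteinQuadratic M K v := by
      unfold bernsteinMonomial
      exact mul_pos (mul_pos (pow_pos hv0 _) (pow_pos (sub_pos.2 hv1) _)) hQv
    rw [← sq_mul_deriv_deriv_bernsteinMonomial] at hprod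
    exact (pos_of_mul_pos_right hprod (by positivity)).le
  have hopen : IsOpen {v | 0 < bernsteinQuadratic M K v} :=
    isOpen_lt continuous_const (by unfold bernsteinQuadratic; fun_prop)
  have hclosed : IsClosed {v | 0 ≤ deriv (deriv (bernsteinMonomial M K)) v} :=
    isClosed_le continuous_const (continuous_deriv_deriv_bernsteinMonomial M K)
  have hu' : u ∈ {v | 0 < bernsteinQuadratic M K v} ∩ closure (Ioo 0 1) := by
    rw [closure_Ioo zero_ne_one]
    exact ⟨hQ, hu⟩
  exact closure_minimal hinterior hclosed (hopen.inter_closure hu')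

lemma abs_sub_natFloor_mul_div_le {N x : ℝ} (hN : 0 < N) (hx : 0 ≤ x) :
    |x - ⌊N * x⌋₊ / N| ≤ 1 / N := by
  have hlo := Nat.floor_le (mul_nonneg hN.le hx)
  have hhi := Nat.lt_floor_add_one (N * x)
  have hdiff : x - ⌊N * x⌋₊ / N = (N * x - ⌊N * x⌋₊) / N := by field_simp
  rw [hdiff, abs_div, abs_of_pos hN, div_le_div_iff_of_pos_right hN, abs_le]
  constructor <;> linarith

lemma dphi_eq_bernsteinMonomial (n : ℕ) (γ : ℝ) :
    dphi n γ = fun t => n * ((n - 1).choose ⌊((n : ℝ) - 1) * γ⌋₊ : ℝ) *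
      bernsteinMonomial ⌊((n : ℝ) - 1) * γ⌋₊ (n - 1 - ⌊((n : ℝ) - 1) * γ⌋₊) t := by
  funext t
  simp only [dphi, bernsteinMonomial, Int.floor_toNat]
  ring

lemma contDiff_dphi (n : ℕ) (γ : ℝ) : ContDiff ℝ 2 (dphi n γ) := by
  rw [dphi_eq_bernsteinMonomial]
  unfold bernsteinMonomial
  fun_prop

lemma deriv_deriv_dphi_nonneg {n : ℕ} {γ u δ : ℝ} (hγ : γ ∈ Icc 0 1) (hu : u ∈ Icc 0 1)
    (hδ : 0 ≤ δ) (hn : 1 < 4 * ((n : ℝ) - 2) * δ ^ 2)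
    (hfar : 1 / ((n : ℝ) - 1) + δ ≤ |u - γ|) :
    0 ≤ deriv (deriv (dphi n γ)) u := by
  set M := ⌊((n : ℝ) - 1) * γ⌋₊
  set K := n - 1 - M
  have hn2 : (0 : ℝ) < n - 2 := by
    by_contra! h
    nlinarith [mul_nonneg (neg_nonneg.2 h) (sq_nonneg δ)]
  have hn1 : 1 ≤ n := by exact_mod_cast (by linarith : (1 : ℝ) ≤ n)
  have hcast : ((n - 1 : ℕ) : ℝ) = n - 1 := by rw [Nat.cast_sub hn1, Nat.cast_one]
  have hM : M ≤ n - 1 := Nat.floor_le_of_le (by rw [hcast]; nlinarith [hγ.2])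
  have hMK : (M : ℝ) + K = n - 1 := by rw [← Nat.cast_add, Nat.add_sub_cancel' hM, hcast]
  have hdist : δ ≤ |u - M / (M + K)| := by
    have hround : |γ - M / ((n : ℝ) - 1)| ≤ 1 / ((n : ℝ) - 1) :=
      abs_sub_natFloor_mul_div_le (by linarith) hγ.1
    rw [hMK]
    linarith [abs_sub_le u (M / ((n : ℝ) - 1)) γ, abs_sub_comm γ (M / ((n : ℝ) - 1))]
  have hQ : 0 < bernsteinQuadratic M K u := by
    refine bernsteinQuadratic_pos ((Nat.cast_pos (α := ℝ)).1 (by push_cast; linarith)) ?_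
    have hsq := pow_le_pow_left₀ hδ hdist 2
    rw [sq_abs] at hsq
    rw [hMK] at hsq ⊢
    nlinarith [mul_le_mul_of_nonneg_left hsq hn2.le]
  rw [dphi_eq_bernsteinMonomial, deriv_const_mul_field', deriv_const_mul_field']
  exact mul_nonneg (by positivity) (deriv_deriv_bernsteinMonomial_nonneg hu hQ)

lemma deriv_deriv_finset_sum {𝕜 F ι : Type*} [NontriviallyNormedField 𝕜] [NormedAddCommGroup F]
    [NormedSpace 𝕜 F] (s : Finset ι) {f : ι → 𝕜 → F} (hf : ∀ i ∈ s, ContDiff 𝕜 2 (f i)) (x : 𝕜) :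
    deriv (deriv fun y => ∑ i ∈ s, f i y) x = ∑ i ∈ s, deriv (deriv (f i)) x := by
  have hderiv : deriv (fun y => ∑ i ∈ s, f i y) = fun y => ∑ i ∈ s, deriv (f i) y :=
    funext fun y => deriv_fun_sum fun i hi => (hf i hi).differentiable two_ne_zero y
  rw [hderiv]
  exact deriv_fun_sum fun i hi => (hf i hi).differentiable_deriv_two x

theorem stmt18_general (p : ℕ)
    (γ : Fin p → ℝ)
    (γseq : Fin p → ℕ → ℝ) (hseqrange : ∀ i n, γseq i n ∈ Set.Icc (0:ℝ) 1)
    (htend : ∀ i, Tendsto (γseq i) atTop (nhds (γ i)))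
    (α : Fin p → ℝ) (hα : ∀ i, α i ∈ Set.Ioo (0:ℝ) 1) :
    ∀ ε > (0:ℝ), ∃ N : ℕ, ∀ n ≥ N,
      ∀ u ∈ Set.Icc (0:ℝ) 1 \ ⋃ i, Set.Ioo (γ i - ε) (γ i + ε),
        0 ≤ deriv (deriv (fun v => ∑ i, α i * dphi n (γseq i n) v)) u := by
  intro ε hε
  have hlarge : ∀ᶠ n : ℕ in atTop, 4 / ε < (n : ℝ) - 1 ∧ 1 / ε ^ 2 < (n : ℝ) - 2 := by
    filter_upwards [tendsto_natCast_atTop_atTop.eventually_gt_atTop (4 / ε + 1),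
      tendsto_natCast_atTop_atTop.eventually_gt_atTop (1 / ε ^ 2 + 2)] with n h₁ h₂
    constructor <;> linarith
  have hclose : ∀ᶠ n in atTop, ∀ i, |γseq i n - γ i| < ε / 4 := eventually_all.2 fun i => by
    simpa only [Real.dist_eq] using Metric.tendsto_nhds.1 (htend i) _ (by positivity)
  obtain ⟨N, hN⟩ := eventually_atTop.1 (hlarge.and hclose)
  refine ⟨N, fun n hn u ⟨hu, hfar⟩ => ?_⟩
  obtain ⟨hn, hγn⟩ := hN n hn
  rw [deriv_deriv_finset_sum (f := fun i v => α i * dphi n (γseq i n) v) _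
    fun i _ => contDiff_const.mul (contDiff_dphi n _)]
  refine Finset.sum_nonneg fun i _ => ?_
  rw [deriv_const_mul_field', deriv_const_mul_field']
  have h4 : 4 < ((n : ℝ) - 1) * ε := (div_lt_iff₀ hε).1 hn.1
  have h1 : 1 < ((n : ℝ) - 2) * ε ^ 2 := (div_lt_iff₀ (by positivity)).1 hn.2
  have hεn : 1 / ((n : ℝ) - 1) < ε / 4 := by
    rw [div_lt_div_iff₀ (by nlinarith) four_pos]
    linarith
  have hεu : ε ≤ |u - γ i| := not_lt.1 fun h => hfar (mem_iUnion.2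
    ⟨i, by rwa [← Real.ball_eq_Ioo, Metric.mem_ball, Real.dist_eq]⟩)
  refine mul_nonneg (hα i).1.le (deriv_deriv_dphi_nonneg (δ := ε / 2) (hseqrange i n) hu
    (by positivity) ?_ ?_)
  · linarith [show 4 * ((n : ℝ) - 2) * (ε / 2) ^ 2 = ((n : ℝ) - 2) * ε ^ 2 by ring]
  · linarith [abs_sub_le u (γseq i n) (γ i), hγn i]

/-- Convexity of the derivative of the mixture distortion function away from the
points `γ_1 < ⋯ < γ_p`: for every `ε > 0` there is `N` such that for `n ≥ N` the third
derivative of `φ_{n,𝛂,𝛄_n} = Σᵢ αᵢ φ_{n,γ_{i,n}}` is nonnegative on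
`[0,1] \ ∪ᵢ (γᵢ−ε, γᵢ+ε)`, i.e. `φ'_{n,𝛂,𝛄_n}` is convex there. -/
theorem stmt18 (p : ℕ) (hp : 1 ≤ p)
    (γ : Fin p → ℝ) (hγrange : ∀ i, γ i ∈ Set.Icc (0:ℝ) 1)
    (hγmono : ∀ i j : Fin p, i < j → γ i < γ j)
    (γseq : Fin p → ℕ → ℝ) (hseqrange : ∀ i n, γseq i n ∈ Set.Icc (0:ℝ) 1)
    (htend : ∀ i, Tendsto (γseq i) atTop (nhds (γ i)))
    (hrate : ∀ i, ∃ K > (0:ℝ), ∃ N : ℕ, ∀ n ≥ N, |γseq i n - γ i| ≤ K / n)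
    (α : Fin p → ℝ) (hα : ∀ i, α i ∈ Set.Ioo (0:ℝ) 1) (hsum : ∑ i, α i = 1) :
    ∀ ε > (0:ℝ), ∃ N : ℕ, ∀ n ≥ N,
      ∀ u ∈ Set.Icc (0:ℝ) 1 \ ⋃ i, Set.Ioo (γ i - ε) (γ i + ε),
        0 ≤ deriv (deriv (fun v => ∑ i, α i * dphi n (γseq i n) v)) u :=
  stmt18_general p γ γseq hseqrange htend α hα
end

section
/- Let γ_{i,n} → γ_i with |γ_{i,n}−γ_i| = O(1/n) for i = 1,…,p with γ_1 < ⋯ < γ_p, and let u_{i,j,n} be a crossing point of φ'_{n,γ_{i,n}} and φ'_{n,γ_{j,n}} between γ_i and γ_j (i ≠ j), i.e. φ'_{n,γ_{i,n}}(u_{i,j,n}) = φ'_{n,γ_{j,n}}(u_{i,j,n}). Then u_{i,j,n} converges as n → ∞ to the unique u_{i,j} ∈ (min(γ_i,γ_j), max(γ_i,γ_j)) satisfying ln((1−u_{i,j})/u_{i,j}) = (1/(γ_j−γ_i))∫_{γ_i}^{γ_j} ln((1−x)/x) dx; in particular u_{i,j} is strictly between γ_i and γ_j. -/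
open MeasureTheory Set Filter

/-!
Write `ℓ x = log ((1 - x) / x)` and `k₁ < k₂` for the indices `⌊(n - 1) γ⌋` of the two
densities. After cancelling the common factor, the crossing equation reads
`C(n-1, k₁) (1 - u)^(k₂ - k₁) = C(n-1, k₂) u^(k₂ - k₁)`; since
`C(n-1, k) / C(n-1, k - 1) = (1 - x) / x` at `x = k / n`, taking logarithms gives
`(k₂ - k₁) ℓ u = ∑_{k₁ < k ≤ k₂} ℓ (k / n)`. As `ℓ` is decreasing and integrable on `(0, 1)`,
this Riemann sum divided by `n` is squeezed between integrals of `ℓ` over intervals tending to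
`[a, b]`, so `ℓ uₙ → M = (1 / (b - a)) ∫_a^b ℓ`. The inverse of `ℓ` is `y ↦ (1 + exp y)⁻¹`, hence
`uₙ → (1 + exp M)⁻¹`, which lies strictly inside `(a, b)` because the mean of a strictly
decreasing function lies strictly between its values at the endpoints.
-/

open Topology Real

section RiemannSums

variable {f : ℝ → ℝ} {a b : ℝ}

lemma mul_le_integral_of_antitoneOn (hab : a ≤ b) (hf : AntitoneOn f (Ioc a b))
    (hint : IntervalIntegrable f volume a b) : (b - a) * f b ≤ ∫ x in a..b, f x := by
  calc (b - a) * f b = ∫ _ in a..b, f b := by simp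
    _ ≤ _ := intervalIntegral.integral_mono_on_of_le_Ioo hab intervalIntegrable_const hint
        fun x hx => hf (Ioo_subset_Ioc_self hx) (right_mem_Ioc.2 (hx.1.trans hx.2)) hx.2.le

lemma integral_le_mul_of_antitoneOn (hab : a ≤ b) (hf : AntitoneOn f (Ico a b))
    (hint : IntervalIntegrable f volume a b) : ∫ x in a..b, f x ≤ (b - a) * f a := by
  calc ∫ x in a..b, f x ≤ ∫ _ in a..b, f a :=
        intervalIntegral.integral_mono_on_of_le_Ioo hab hint intervalIntegrable_const
          fun x hx => hf (left_mem_Ico.2 (hx.1.trans hx.2)) (Ioo_subset_Ico_self hx) hx.1.le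
    _ = (b - a) * f a := by simp

variable {x₀ δ : ℝ} {m : ℕ}

lemma integral_eq_sum_integral_steps (hint : ∀ s t, IntervalIntegrable f volume s t) :
    ∫ x in x₀..x₀ + m * δ, f x =
      ∑ i ∈ Finset.range m, ∫ x in x₀ + i * δ..x₀ + (i + 1) * δ, f x := by
  simpa using (intervalIntegral.sum_integral_adjacent_intervals
    (a := fun i : ℕ => x₀ + i * δ) (n := m) fun i _ => hint _ _).symm

lemma mul_sum_le_integral_of_antitoneOn (hδ : 0 ≤ δ) (hf : AntitoneOn f (Ioc x₀ (x₀ + m * δ)))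
    (hint : ∀ s t, IntervalIntegrable f volume s t) :
    δ * ∑ i ∈ Finset.range m, f (x₀ + (i + 1) * δ) ≤ ∫ x in x₀..x₀ + m * δ, f x := by
  rw [integral_eq_sum_integral_steps hint, Finset.mul_sum]
  refine Finset.sum_le_sum fun i hi => ?_
  have hi : (i : ℝ) + 1 ≤ m := by exact_mod_cast Finset.mem_range.1 hi
  have h := mul_le_integral_of_antitoneOn (f := f) (a := x₀ + i * δ) (b := x₀ + (i + 1) * δ)
    (by nlinarith) (hf.mono (Ioc_subset_Ioc (by nlinarith [i.cast_nonneg (α := ℝ)])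
      (by nlinarith))) (hint _ _)
  rwa [show x₀ + (i + 1) * δ - (x₀ + i * δ) = δ by ring] at h

lemma integral_le_mul_sum_of_antitoneOn (hδ : 0 ≤ δ) (hf : AntitoneOn f (Ico x₀ (x₀ + m * δ)))
    (hint : ∀ s t, IntervalIntegrable f volume s t) :
    ∫ x in x₀..x₀ + m * δ, f x ≤ δ * ∑ i ∈ Finset.range m, f (x₀ + i * δ) := by
  rw [integral_eq_sum_integral_steps hint, Finset.mul_sum]
  refine Finset.sum_le_sum fun i hi => ?_
  have hi : (i : ℝ) + 1 ≤ m := by exact_mod_cast Finset.mem_range.1 hi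
  have h := integral_le_mul_of_antitoneOn (f := f) (a := x₀ + i * δ) (b := x₀ + (i + 1) * δ)
    (by nlinarith) (hf.mono (Ico_subset_Ico (by nlinarith [i.cast_nonneg (α := ℝ)])
      (by nlinarith))) (hint _ _)
  rwa [show x₀ + (i + 1) * δ - (x₀ + i * δ) = δ by ring] at h

lemma gridSum_div_le_integral (hf : AntitoneOn f (Ioo 0 1))
    (hint : ∀ s t, IntervalIntegrable f volume s t) {n j m : ℕ} (h : j + m < n) :
    (∑ i ∈ Finset.range m, f ((j + i + 1 : ℝ) / n)) / n ≤
      ∫ x in (j : ℝ) / n..(j + m : ℝ) / n, f x := by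
  have hn : (0 : ℝ) < n := by exact_mod_cast (Nat.zero_le _).trans_lt h
  have hjm : (j + m : ℝ) < n := by exact_mod_cast h
  have hpt (i : ℝ) : (j : ℝ) / n + (i + 1) * (1 / n) = (j + i + 1) / n := by
    field_simp; ring
  have hend : (j : ℝ) / n + m * (1 / n) = (j + m) / n := by field_simp
  have hsub : Ioc ((j : ℝ) / n) ((j + m) / n) ⊆ Ioo 0 1 := fun x hx =>
    ⟨lt_of_le_of_lt (by positivity) hx.1, hx.2.trans_lt ((div_lt_one hn).2 hjm)⟩
  have key := mul_sum_le_integral_of_antitoneOn (x₀ := (j : ℝ) / n) (δ := 1 / n) (m := m)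
    (by positivity) (hf.mono (by rw [hend]; exact hsub)) hint
  simp only [hpt, hend] at key
  rwa [one_div_mul_eq_div] at key

lemma integral_le_gridSum_div (hf : AntitoneOn f (Ioo 0 1))
    (hint : ∀ s t, IntervalIntegrable f volume s t) {n j m : ℕ} (h : j + m < n) :
    ∫ x in (j + 1 : ℝ) / n..(j + m + 1 : ℝ) / n, f x ≤
      (∑ i ∈ Finset.range m, f ((j + i + 1 : ℝ) / n)) / n := by
  have hn : (0 : ℝ) < n := by exact_mod_cast (Nat.zero_le _).trans_lt h
  have hjm : (j + m + 1 : ℝ) ≤ n := by exact_mod_cast h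
  have hpt (i : ℝ) : (j + 1 : ℝ) / n + i * (1 / n) = (j + i + 1) / n := by field_simp; ring
  have hend : (j + 1 : ℝ) / n + m * (1 / n) = (j + m + 1) / n := by field_simp; ring
  have hsub : Ico ((j + 1 : ℝ) / n) ((j + m + 1) / n) ⊆ Ioo 0 1 := fun x hx =>
    ⟨lt_of_lt_of_le (by positivity) hx.1, hx.2.trans_le ((div_le_one hn).2 hjm)⟩
  have key := integral_le_mul_sum_of_antitoneOn (x₀ := (j + 1 : ℝ) / n) (δ := 1 / n) (m := m)
    (by positivity) (hf.mono (by rw [hend]; exact hsub)) hint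
  simp only [hpt] at key
  rwa [one_div_mul_eq_div] at key

lemma tendsto_intervalIntegral_of_tendsto {ι : Type*} {l : Filter ι}
    {p q : ι → ℝ} (hint : ∀ s t, IntervalIntegrable f volume s t)
    (hp : Tendsto p l (𝓝 a)) (hq : Tendsto q l (𝓝 b)) :
    Tendsto (fun i => ∫ x in p i..q i, f x) l (𝓝 (∫ x in a..b, f x)) := by
  have hF := intervalIntegral.continuous_primitive hint 0
  have hsub (s t : ℝ) : (∫ x in 0..t, f x) - ∫ x in 0..s, f x = ∫ x in s..t, f x :=
    intervalIntegral.integral_interval_sub_left (hint 0 t) (hint 0 s)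
  rw [← hsub]
  exact (((hF.tendsto b).comp hq).sub ((hF.tendsto a).comp hp)).congr fun i => hsub _ _

lemma tendsto_gridSum_div (hf : AntitoneOn f (Ioo 0 1))
    (hint : ∀ s t, IntervalIntegrable f volume s t) {j k : ℕ → ℕ}
    (hjk : ∀ᶠ n in atTop, j n ≤ k n ∧ k n < n)
    (hj : Tendsto (fun n => (j n : ℝ) / n) atTop (𝓝 a))
    (hk : Tendsto (fun n => (k n : ℝ) / n) atTop (𝓝 b)) :
    Tendsto (fun n => (∑ i ∈ Finset.range (k n - j n), f ((j n + i + 1 : ℝ) / n)) / n) atTop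
      (𝓝 (∫ x in a..b, f x)) := by
  have hsucc {c : ℕ → ℕ} {t : ℝ} (hc : Tendsto (fun n => (c n : ℝ) / n) atTop (𝓝 t)) :
      Tendsto (fun n => (c n + 1 : ℝ) / n) atTop (𝓝 t) := by
    have := hc.add (tendsto_one_div_atTop_nhds_zero_nat (𝕜 := ℝ))
    rw [add_zero] at this
    exact this.congr fun n => (add_div _ _ _).symm
  refine tendsto_of_tendsto_of_tendsto_of_le_of_le'
    (tendsto_intervalIntegral_of_tendsto hint (hsucc hj) (hsucc hk))
    (tendsto_intervalIntegral_of_tendsto hint hj hk) ?_ ?_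
  all_goals
    filter_upwards [hjk] with n h
    obtain ⟨m, hm⟩ := exists_add_of_le h.1
    have hmn : j n + m < n := hm ▸ h.2
    rw [hm, Nat.add_sub_cancel_left]
    push_cast
  · exact integral_le_gridSum_div hf hint hmn
  · exact gridSum_div_le_integral hf hint hmn

end RiemannSums

lemma integral_lt_mul_of_forall_lt {f : ℝ → ℝ} {a b c : ℝ} (hab : a < b)
    (hf : IntervalIntegrable f volume a b) (h : ∀ x ∈ Ioo a b, f x < c) :
    ∫ x in a..b, f x < (b - a) * c := by
  have hpos := intervalIntegral.intervalIntegral_pos_of_pos_on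
    (intervalIntegrable_const.sub hf) (fun x hx => sub_pos.2 (h x hx)) hab
  rw [intervalIntegral.integral_sub intervalIntegrable_const hf, intervalIntegral.integral_const,
    smul_eq_mul] at hpos
  linarith

lemma mul_lt_integral_of_forall_lt {f : ℝ → ℝ} {a b c : ℝ} (hab : a < b)
    (hf : IntervalIntegrable f volume a b) (h : ∀ x ∈ Ioo a b, c < f x) :
    (b - a) * c < ∫ x in a..b, f x := by
  have := integral_lt_mul_of_forall_lt hab hf.neg (c := -c) fun x hx => neg_lt_neg (h x hx)
  rw [Pi.neg_def, intervalIntegral.integral_neg] at this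
  linarith

section Binomial

variable {K : Type*} [Field K] [CharZero K]

lemma Nat.cast_choose_succ_mul (N k : ℕ) :
    (N.choose (k + 1) : K) * (k + 1) = N.choose k * (N - k) := by
  rcases le_or_gt k N with hkN | hNk
  · have h := congrArg (Nat.cast (R := K)) (Nat.choose_succ_right_eq N k)
    push_cast [Nat.cast_sub hkN] at h
    exact h
  · simp [Nat.choose_eq_zero_of_lt hNk, Nat.choose_eq_zero_of_lt (hNk.trans (Nat.lt_succ_self k))]

lemma Nat.cast_choose_add_eq_mul_prod (N j m : ℕ) :
    (N.choose (j + m) : K) =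
      N.choose j * ∏ i ∈ Finset.range m, ((N : K) - (j + i)) / (j + i + 1) := by
  induction m with
  | zero => simp
  | succ m ih =>
    have h := Nat.cast_choose_succ_mul (K := K) N (j + m)
    push_cast at h
    rw [Finset.prod_range_succ, ← mul_assoc, ← ih, mul_div_assoc',
      eq_div_iff (by exact_mod_cast (j + m).succ_ne_zero), ← add_assoc, ← h]

end Binomial

noncomputable def negLogit (x : ℝ) : ℝ := log ((1 - x) / x)

lemma negLogit_eq_log_sub_log (x : ℝ) : negLogit x = log (1 - x) - log x := by
  rcases eq_or_ne x 0 with rfl | hx0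
  · simp [negLogit]
  rcases eq_or_ne x 1 with rfl | hx1
  · simp [negLogit]
  exact log_div (sub_ne_zero.2 hx1.symm) hx0

lemma intervalIntegrable_negLogit (a b : ℝ) : IntervalIntegrable negLogit volume a b := by
  have h : IntervalIntegrable (fun x => log (1 - x)) volume a b := by
    simpa using (intervalIntegral.intervalIntegrable_log' (a := 1 - a) (b := 1 - b)).comp_sub_left 1
  exact (h.sub intervalIntegral.intervalIntegrable_log').congr fun x _ =>
    (negLogit_eq_log_sub_log x).symm

lemma negLogit_strictAntiOn : StrictAntiOn negLogit (Ioo 0 1) := by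
  intro x hx y hy hxy
  refine log_lt_log (div_pos (sub_pos.2 hy.2) hy.1) ?_
  rw [div_lt_div_iff₀ hy.1 hx.1]
  nlinarith

lemma inv_one_add_exp_negLogit {x : ℝ} (hx : x ∈ Ioo 0 1) : (1 + exp (negLogit x))⁻¹ = x := by
  have hx0 : x ≠ 0 := hx.1.ne'
  rw [negLogit, exp_log (div_pos (sub_pos.2 hx.2) hx.1),
    show 1 + (1 - x) / x = x⁻¹ by field_simp; ring, inv_inv]

lemma negLogit_inv_one_add_exp (y : ℝ) : negLogit (1 + exp y)⁻¹ = y := by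
  rw [negLogit, show (1 - (1 + exp y)⁻¹) / (1 + exp y)⁻¹ = exp y by field_simp; ring, log_exp]

lemma strictAnti_inv_one_add_exp : StrictAnti fun y : ℝ => (1 + exp y)⁻¹ :=
  fun _ _ h => inv_strictAnti₀ (by positivity) (by gcongr)

lemma mul_negLogit_eq_sum_of_choose_mul_eq {n j k : ℕ} {u : ℝ} (hu : u ∈ Ioo 0 1) (hjk : j ≤ k)
    (hkn : k < n)
    (h : ((n - 1).choose j : ℝ) * u ^ j * (1 - u) ^ (n - 1 - j) =
      (n - 1).choose k * u ^ k * (1 - u) ^ (n - 1 - k)) :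
    ((k : ℝ) - j) * negLogit u = ∑ i ∈ Finset.range (k - j), negLogit ((j + i + 1 : ℝ) / n) := by
  obtain ⟨m, rfl⟩ := exists_add_of_le hjk
  obtain ⟨hu0, hu1⟩ : 0 < u ∧ 0 < 1 - u := ⟨hu.1, sub_pos.2 hu.2⟩
  have hn : (1 : ℝ) ≤ n := by exact_mod_cast (Nat.zero_le _).trans_lt hkn
  have hchoose : ((n - 1).choose j : ℝ) * (1 - u) ^ m = (n - 1).choose (j + m) * u ^ m := by
    refine mul_right_cancel₀ (b := u ^ j * (1 - u) ^ (n - 1 - (j + m))) (by positivity) ?_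
    rw [show n - 1 - j = n - 1 - (j + m) + m by omega, pow_add, pow_add] at h
    linear_combination h
  have hC : ((n - 1).choose j : ℝ) ≠ 0 := by exact_mod_cast (Nat.choose_pos (by omega)).ne'
  have hpow : ((1 - u) / u) ^ m =
      ∏ i ∈ Finset.range m, (1 - (j + i + 1 : ℝ) / n) / ((j + i + 1 : ℝ) / n) := by
    rw [Nat.cast_choose_add_eq_mul_prod, mul_comm _ (u ^ m), mul_left_comm,
      mul_right_inj' hC] at hchoose
    rw [div_pow, hchoose, mul_div_cancel_left₀ _ (pow_ne_zero m hu0.ne')]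
    refine Finset.prod_congr rfl fun i _ => ?_
    rw [Nat.cast_sub (by omega)]
    field_simp
    ring
  have := congrArg log hpow
  rw [log_pow, log_prod] at this
  · push_cast
    rw [add_sub_cancel_left, Nat.add_sub_cancel_left]
    exact this
  · intro i hi
    have hi : (j : ℝ) + i + 1 < n := by
      exact_mod_cast (show j + i + 1 < n by have := Finset.mem_range.1 hi; omega)
    have hx : (j + i + 1 : ℝ) / n < 1 := by rw [div_lt_one (by linarith)]; exact hi
    exact (div_pos (sub_pos.2 hx) (by positivity)).ne'

lemma inv_one_add_exp_average_negLogit_mem_Ioo {a b : ℝ} (ha : 0 ≤ a) (hab : a < b) (hb : b ≤ 1) :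
    (1 + exp ((1 / (b - a)) * ∫ x in a..b, negLogit x))⁻¹ ∈ Ioo a b := by
  have hba : 0 < b - a := sub_pos.2 hab
  have hint := intervalIntegrable_negLogit a b
  constructor
  · rcases ha.eq_or_lt with rfl | ha0
    · positivity
    have haI : a ∈ Ioo 0 1 := ⟨ha0, hab.trans_le hb⟩
    have hlt := integral_lt_mul_of_forall_lt hab hint fun x hx =>
      negLogit_strictAntiOn haI ⟨ha0.trans hx.1, hx.2.trans_le hb⟩ hx.1
    calc a = (1 + exp (negLogit a))⁻¹ := (inv_one_add_exp_negLogit haI).symm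
      _ < _ := strictAnti_inv_one_add_exp (by rwa [one_div, inv_mul_lt_iff₀ hba])
  · rcases hb.eq_or_lt with rfl | hb1
    · exact inv_lt_one_of_one_lt₀ (lt_add_of_pos_right 1 (exp_pos _))
    have hbI : b ∈ Ioo 0 1 := ⟨ha.trans_lt hab, hb1⟩
    have hlt := mul_lt_integral_of_forall_lt hab hint fun x hx =>
      negLogit_strictAntiOn ⟨ha.trans_lt hx.1, hx.2.trans hb1⟩ hbI hx.2
    calc _ < (1 + exp (negLogit b))⁻¹ :=
          strictAnti_inv_one_add_exp (by rwa [one_div, lt_inv_mul_iff₀ hba])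
      _ = b := inv_one_add_exp_negLogit hbI

lemma tendsto_negLogit_of_choose_mul_eq {a b : ℝ} (hab : a < b) {j k : ℕ → ℕ} {u : ℕ → ℝ}
    (hj : Tendsto (fun n => (j n : ℝ) / n) atTop (𝓝 a))
    (hk : Tendsto (fun n => (k n : ℝ) / n) atTop (𝓝 b)) (hkn : ∀ᶠ n in atTop, k n < n)
    (hu : ∀ᶠ n in atTop, u n ∈ Ioo 0 1)
    (hcross : ∀ᶠ n in atTop, ((n - 1).choose (j n) : ℝ) * u n ^ j n * (1 - u n) ^ (n - 1 - j n) =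
      (n - 1).choose (k n) * u n ^ k n * (1 - u n) ^ (n - 1 - k n)) :
    Tendsto (fun n => negLogit (u n)) atTop (𝓝 ((1 / (b - a)) * ∫ x in a..b, negLogit x)) := by
  have hgap : Tendsto (fun n => ((k n : ℝ) - j n) / n) atTop (𝓝 (b - a)) :=
    (hk.sub hj).congr fun n => (sub_div _ _ _).symm
  have hjk : ∀ᶠ n in atTop, j n < k n := by
    filter_upwards [hgap.eventually_const_lt (sub_pos.2 hab), eventually_gt_atTop 0] with n hn hn0
    exact_mod_cast sub_pos.1 ((div_pos_iff_of_pos_right (by exact_mod_cast hn0)).1 hn)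
  have hsum := tendsto_gridSum_div negLogit_strictAntiOn.antitoneOn intervalIntegrable_negLogit
    ((hjk.and hkn).mono fun n h => ⟨h.1.le, h.2⟩) hj hk
  rw [one_div_mul_eq_div]
  refine (hsum.div hgap (sub_pos.2 hab).ne').congr' ?_
  filter_upwards [hjk, hkn, hu, hcross] with n hjkn hknn hun hcrossn
  have hn : (0 : ℝ) < n := by exact_mod_cast (Nat.zero_le _).trans_lt hknn
  have hd : (0 : ℝ) < k n - j n := sub_pos.2 (by exact_mod_cast hjkn)
  simp only [Pi.div_apply]
  rw [← mul_negLogit_eq_sum_of_choose_mul_eq hun hjkn.le hknn hcrossn]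
  field_simp

noncomputable def orderIndex (n : ℕ) (α : ℝ) : ℕ := (⌊((n : ℝ) - 1) * α⌋).toNat

lemma dphi_eq_mul (n : ℕ) (α t : ℝ) :
    dphi n α t = n * (((n - 1).choose (orderIndex n α) : ℝ) * t ^ orderIndex n α *
      (1 - t) ^ (n - 1 - orderIndex n α)) := by
  rw [dphi, orderIndex]
  ring

lemma orderIndex_lt {n : ℕ} {α : ℝ} (hn : n ≠ 0) (hα : α ∈ Icc 0 1) : orderIndex n α < n := by
  have hn1 : (1 : ℝ) ≤ n := by exact_mod_cast Nat.one_le_iff_ne_zero.2 hn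
  rw [orderIndex, Int.floor_toNat, Nat.floor_lt' hn]
  nlinarith [hα.1, hα.2]

lemma tendsto_orderIndex_div {γ : ℕ → ℝ} {c : ℝ} (hγ : ∀ n, γ n ∈ Icc 0 1)
    (h : Tendsto γ atTop (𝓝 c)) :
    Tendsto (fun n => (orderIndex n (γ n) : ℝ) / n) atTop (𝓝 c) := by
  have hlow : Tendsto (fun n : ℕ => γ n - 2 / n) atTop (𝓝 c) := by
    simpa using h.sub (tendsto_const_div_atTop_nhds_zero_nat (2 : ℝ))
  refine tendsto_of_tendsto_of_tendsto_of_le_of_le' hlow h ?_ ?_ <;>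
    filter_upwards [eventually_ge_atTop 1] with n hn <;>
    have hn : (1 : ℝ) ≤ n := by exact_mod_cast hn
  all_goals
    have hx : 0 ≤ ((n : ℝ) - 1) * γ n := mul_nonneg (by linarith) (hγ n).1
    obtain ⟨hγ0, hγ1⟩ := hγ n
    rw [orderIndex, Int.floor_toNat]
  · have := Nat.lt_floor_add_one (((n : ℝ) - 1) * γ n)
    calc γ n - 2 / n = (n * γ n - 2) / n := by field_simp
      _ ≤ _ := by gcongr; linarith
  · have := Nat.floor_le hx
    rw [div_le_iff₀ (by linarith)]
    nlinarith

theorem stmt19_general (a b : ℝ) (ha : a ∈ Set.Icc (0:ℝ) 1) (hb : b ∈ Set.Icc (0:ℝ) 1)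
    (hab : a < b)
    (γ1 γ2 : ℕ → ℝ)
    (hγ1range : ∀ n, γ1 n ∈ Set.Icc (0:ℝ) 1) (hγ2range : ∀ n, γ2 n ∈ Set.Icc (0:ℝ) 1)
    (hγ1tend : Tendsto γ1 atTop (nhds a)) (hγ2tend : Tendsto γ2 atTop (nhds b))
    (u : ℕ → ℝ)
    (hcross : ∀ᶠ n in atTop,
      u n ∈ Set.Ioo a b ∧ dphi n (γ1 n) (u n) = dphi n (γ2 n) (u n)) :
    ∃ L ∈ Set.Ioo a b, Tendsto u atTop (nhds L) ∧
      Real.log ((1 - L) / L) = (1 / (b - a)) * ∫ x in a..b, Real.log ((1 - x) / x) ∧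
      ∀ L' ∈ Set.Ioo a b,
        Real.log ((1 - L') / L') = (1 / (b - a)) * ∫ x in a..b, Real.log ((1 - x) / x) →
        L' = L := by
  set M := (1 / (b - a)) * ∫ x in a..b, negLogit x
  have hu : ∀ᶠ n in atTop, u n ∈ Ioo 0 1 :=
    hcross.mono fun n h => ⟨ha.1.trans_lt h.1.1, h.1.2.trans_le hb.2⟩
  have hM : Tendsto (fun n => negLogit (u n)) atTop (𝓝 M) := by
    refine tendsto_negLogit_of_choose_mul_eq hab (tendsto_orderIndex_div hγ1range hγ1tend)
      (tendsto_orderIndex_div hγ2range hγ2tend) ?_ hu ?_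
    · filter_upwards [eventually_ne_atTop 0] with n hn using orderIndex_lt hn (hγ2range n)
    · filter_upwards [hcross, eventually_ne_atTop 0] with n h hn
      rw [dphi_eq_mul, dphi_eq_mul] at h
      exact mul_left_cancel₀ (Nat.cast_ne_zero.2 hn) h.2
  refine ⟨(1 + exp M)⁻¹, inv_one_add_exp_average_negLogit_mem_Ioo ha.1 hab hb.2, ?_,
    negLogit_inv_one_add_exp M, fun L' hL' hL'M => ?_⟩
  · have hcont : Continuous fun y : ℝ => (1 + exp y)⁻¹ :=
      (continuous_const.add continuous_exp).inv₀ fun y => (add_pos one_pos (exp_pos y)).ne'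
    exact ((hcont.tendsto M).comp hM).congr' (hu.mono fun n hn => inv_one_add_exp_negLogit hn)
  · rw [← inv_one_add_exp_negLogit ⟨ha.1.trans_lt hL'.1, hL'.2.trans_le hb.2⟩]
    exact congrArg (fun y => (1 + exp y)⁻¹) hL'M

/-- Crossing points of the densities of two order statistics: if `γ_{i,n} → a` and
`γ_{j,n} → b` with `a < b`, rates `O(1/n)`, and `u_n ∈ (a,b)` is a crossing point of
`φ'_{n,γ_{i,n}}` and `φ'_{n,γ_{j,n}}`, then `u_n` converges to the unique
`L ∈ (a,b)` with `ln((1−L)/L) = (1/(b−a)) ∫_a^b ln((1−x)/x) dx`. -/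
theorem stmt19 (a b : ℝ) (ha : a ∈ Set.Icc (0:ℝ) 1) (hb : b ∈ Set.Icc (0:ℝ) 1)
    (hab : a < b)
    (γ1 γ2 : ℕ → ℝ)
    (hγ1range : ∀ n, γ1 n ∈ Set.Icc (0:ℝ) 1) (hγ2range : ∀ n, γ2 n ∈ Set.Icc (0:ℝ) 1)
    (hγ1tend : Tendsto γ1 atTop (nhds a)) (hγ2tend : Tendsto γ2 atTop (nhds b))
    (hrate1 : ∃ K > (0:ℝ), ∃ N : ℕ, ∀ n ≥ N, |γ1 n - a| ≤ K / n)
    (hrate2 : ∃ K > (0:ℝ), ∃ N : ℕ, ∀ n ≥ N, |γ2 n - b| ≤ K / n)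
    (u : ℕ → ℝ)
    (hcross : ∀ᶠ n in atTop,
      u n ∈ Set.Ioo a b ∧ dphi n (γ1 n) (u n) = dphi n (γ2 n) (u n)) :
    ∃ L ∈ Set.Ioo a b, Tendsto u atTop (nhds L) ∧
      Real.log ((1 - L) / L) = (1 / (b - a)) * ∫ x in a..b, Real.log ((1 - x) / x) ∧
      ∀ L' ∈ Set.Ioo a b,
        Real.log ((1 - L') / L') = (1 / (b - a)) * ∫ x in a..b, Real.log ((1 - x) / x) →
        L' = L :=
  stmt19_general a b ha hb hab γ1 γ2 hγ1range hγ2range hγ1tend hγ2tend u hcross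
end
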